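/- arXiv:1809.03649 — 8 statements merged into one kernel-verified Lean document; each statement's English description precedes it below -/
import Mathlib

section
/- Let K be a CM field with maximal totally real subfield F. If α ∈ O_K is a Weil generator for K (i.e., αᾱ ∈ ℤ and ℤ[α, ᾱ] = O_K), then O_F = ℤ[α + ᾱ]. -/
/-- `F` is totally real: every complex embedding has real image. -/
def TotallyReal (F : Type*) [Field F] : Prop :=
  ∀ φ : F →+* ℂ, ∀ x : F, (starRingEnd ℂ) (φ x) = φ x

/-- `K` is totally imaginary: no complex embedding has real image. -/
def TotallyImaginary (K : Type*) [Field K] : Prop :=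
  ∀ φ : K →+* ℂ, ∃ x : K, (starRingEnd ℂ) (φ x) ≠ φ x

/-- `α` is a Weil generator of the CM field `K` with complex conjugation `c`:
`α` is an algebraic integer, `α·ᾱ ∈ ℤ`, and `ℤ[α, ᾱ] = 𝓞 K`. -/
def IsWeilGenerator (K : Type*) [Field K] (c : K ≃+* K) (α : K) : Prop :=
  α ∈ integralClosure ℤ K ∧ (∃ n : ℤ, α * c α = (n : K)) ∧
    Algebra.adjoin ℤ ({α, c α} : Set K) = integralClosure ℤ K

/-! Write `b = α + ᾱ`. Since `α² = bα - αᾱ` with `αᾱ ∈ ℤ`, every element of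
`𝓞 K = ℤ[α, ᾱ]` has the form `r + sα` with `r, s ∈ ℤ[b]`. If it lies in `F`, it is fixed by
conjugation, so `r + sα = r + sᾱ`, and `s = 0` because `α ≠ ᾱ`: otherwise conjugation would
fix `ℤ[α, ᾱ] = 𝓞 K`, hence `K`, which is impossible for a totally imaginary field. -/

open Algebra

section AdjoinQuadratic

variable {R A : Type*} [CommRing R] [CommRing A] [Algebra R A]

theorem exists_eq_add_mul_of_mem_adjoin_pair {α b : A} {n : R}
    (hsq : α * α = b * α - algebraMap R A n) {x : A} (hx : x ∈ adjoin R {α, b - α}) :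
    ∃ r ∈ adjoin R {b}, ∃ s ∈ adjoin R {b}, x = r + s * α := by
  have hb : b ∈ adjoin R {b} := subset_adjoin rfl
  induction hx using adjoin_induction with
  | mem y hy =>
    rcases hy with rfl | rfl
    · exact ⟨0, zero_mem _, 1, one_mem _, by ring⟩
    · exact ⟨b, hb, -1, neg_mem (one_mem _), by ring⟩
  | algebraMap r => exact ⟨algebraMap R A r, algebraMap_mem _ r, 0, zero_mem _, by ring⟩
  | add x y _ _ ihx ihy =>
    obtain ⟨r, hr, s, hs, rfl⟩ := ihx
    obtain ⟨r', hr', s', hs', rfl⟩ := ihy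
    exact ⟨r + r', add_mem hr hr', s + s', add_mem hs hs', by ring⟩
  | mul x y _ _ ihx ihy =>
    obtain ⟨r, hr, s, hs, rfl⟩ := ihx
    obtain ⟨r', hr', s', hs', rfl⟩ := ihy
    refine ⟨r * r' - algebraMap R A n * (s * s'),
      sub_mem (mul_mem hr hr') (mul_mem (algebraMap_mem _ n) (mul_mem hs hs')),
      r * s' + s * r' + b * (s * s'),
      add_mem (add_mem (mul_mem hr hs') (mul_mem hs hr')) (mul_mem hb (mul_mem hs hs')), ?_⟩
    linear_combination s * s' * hsq

theorem mem_adjoin_add_of_mem_adjoin_pair_of_fixed [IsDomain A] (σ : A →ₐ[R] A) {α : A}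
    (hσ : σ (σ α) = α) (hα : σ α ≠ α) (hnorm : α * σ α ∈ Set.range (algebraMap R A))
    {x : A} (hx : x ∈ adjoin R {α, σ α}) (hfix : σ x = x) : x ∈ adjoin R {α + σ α} := by
  set b := α + σ α
  obtain ⟨n, hn⟩ := hnorm
  have hσα : σ α = b - α := by ring
  have hsq : α * α = b * α - algebraMap R A n := by rw [hn, hσα]; ring
  rw [hσα] at hx
  obtain ⟨r, hr, s, hs, rfl⟩ := exists_eq_add_mul_of_mem_adjoin_pair hsq hx
  have hσb : Set.EqOn σ (AlgHom.id R A) (adjoin R {b}) :=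
    AlgHom.eqOn_adjoin_iff.mpr <| by rintro _ rfl; simp [b, hσ, add_comm]
  have hs0 : s * (σ α - α) = 0 := by
    rw [map_add, map_mul, hσb hr, hσb hs, AlgHom.id_apply, AlgHom.id_apply] at hfix
    linear_combination hfix
  rw [(mul_eq_zero.mp hs0).resolve_right (sub_ne_zero.mpr hα), zero_mul, add_zero]
  exact hr

end AdjoinQuadratic

theorem NumberField.ringHom_ext_of_isIntegral {K L : Type*} [Field K] [NumberField K]
    [Semiring L] {f g : K →+* L} (h : ∀ x : K, IsIntegral ℤ x → f x = g x) : f = g :=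
  IsLocalization.ringHom_ext (nonZeroDivisors (NumberField.RingOfIntegers K)) <|
    RingHom.ext fun x => h x x.2

theorem TotallyImaginary.ringHom_ne_id {K : Type*} [Field K] [NumberField K]
    (hK : TotallyImaginary K) (c : K →+* K)
    (hc : ∀ φ : K →+* ℂ, ∀ x : K, φ (c x) = (starRingEnd ℂ) (φ x)) :
    c ≠ RingHom.id K := by
  rintro rfl
  let φ : K →+* ℂ := (IsAlgClosed.lift : K →ₐ[ℚ] ℂ)
  obtain ⟨x, hx⟩ := hK φ
  exact hx (hc φ x).symm

theorem stmt3_general (F K : Type*) [Field F] [Field K] [NumberField K]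
    [Algebra F K] (hK : TotallyImaginary K) (c : K ≃ₐ[F] K)
    (hc : ∀ φ : K →+* ℂ, ∀ x : K, φ (c x) = (starRingEnd ℂ) (φ x))
    (α : K) (hW : IsWeilGenerator K c.toRingEquiv α)
    (β : F) (hβ : algebraMap F K β = α + c α) :
    Algebra.adjoin ℤ ({β} : Set F) = integralClosure ℤ F := by
  obtain ⟨hαint, ⟨n, hn⟩, hadj⟩ := hW
  let σ : K →ₐ[ℤ] K := (c : K →+* K).toIntAlgHom
  have hσ : σ (σ α) = α := by
    have hcβ := c.commutes β
    rw [hβ, map_add] at hcβ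
    exact add_left_cancel (hcβ.trans (add_comm _ _))
  have hσα : σ α ≠ α := by
    intro h
    refine hK.ringHom_ne_id (c : K →+* K) hc <|
      NumberField.ringHom_ext_of_isIntegral fun x hx => ?_
    have hfix : Set.EqOn σ (AlgHom.id ℤ K) (adjoin ℤ {α, σ α}) :=
      AlgHom.eqOn_adjoin_iff.mpr <| by rintro _ (rfl | rfl) <;> simp [h]
    exact hfix (hadj ▸ hx)
  refine le_antisymm (adjoin_le_iff.mpr (Set.singleton_subset_iff.mpr ?_)) fun x hx => ?_
  · change IsIntegral ℤ β
    rw [← isIntegral_algebraMap_iff (algebraMap F K).injective, hβ]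
    exact hαint.add (hαint.map σ)
  · have hxK : algebraMap F K x ∈ adjoin ℤ {α + σ α} :=
      mem_adjoin_add_of_mem_adjoin_pair_of_fixed σ hσ hσα ⟨n, hn.symm⟩
        (hadj ▸ hx.map (IsScalarTower.toAlgHom ℤ F K)) (c.commutes x)
    rw [show α + σ α = IsScalarTower.toAlgHom ℤ F K β from hβ.symm,
      ← AlgHom.map_adjoin_singleton] at hxK
    obtain ⟨y, hy, hyx⟩ := hxK
    rwa [(algebraMap F K).injective hyx] at hy

/-- Let `K` be a CM field with maximal totally real subfield `F`
(the fixed field of complex conjugation `c`).  If `α ∈ 𝓞 K` is a Weil generator for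
`K`, then `𝓞 F = ℤ[α + ᾱ]`. -/
theorem stmt3 (F K : Type*) [Field F] [Field K] [NumberField F] [NumberField K]
    [Algebra F K] (hF : TotallyReal F) (hK : TotallyImaginary K)
    (h2 : Module.finrank F K = 2) (c : K ≃ₐ[F] K)
    (hc : ∀ φ : K →+* ℂ, ∀ x : K, φ (c x) = (starRingEnd ℂ) (φ x))
    (hfix : ∀ x : K, c x = x ↔ x ∈ (algebraMap F K).range)
    (α : K) (hW : IsWeilGenerator K c.toRingEquiv α)
    (β : F) (hβ : algebraMap F K β = α + c α) :
    Algebra.adjoin ℤ ({β} : Set F) = integralClosure ℤ F :=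
  stmt3_general F K hK c hc α hW β hβ
end

section
/- Let K = ℚ(√15, √(-2)) with maximal totally real subfield F = ℚ(√15). There is no α ∈ O_K with O_K = O_F[α]. (Key facts: Diff_{K/F} = (2), and every unit of O_K lies in F, so α - ᾱ = 2u forces the contradiction that a conjugation-antiinvariant element is fixed by conjugation.) -/
/-!
Write `K = F(s)` and `α = P + w s` with `P, w ∈ F`. If `𝓞 K = 𝓞 F[α] = 𝓞 F + 𝓞 F α`, the
`s`-coordinates of the elements of `𝓞 K` are exactly the multiples `h w` with `h ∈ 𝓞 F`.
Applied to `s` and to `s (1 + √15) / 2` this shows that `c = w⁻¹` lies in `𝓞 F = ℤ[√15]`, and even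
in the prime `𝔭 = (2, 1 + √15)` above `2`. The discriminant of the minimal polynomial
`X² - U X + V` of `α` over `𝓞 F` is `-8 w²`, so `c² (U² - 4 V) = -8`. If `c ∈ 𝔭² = (2)`, then
`c = 2 c'` and `(c' U)² = -2 + 4 c'² V`, which is impossible modulo `4`. Otherwise `N(c) ≡ 2 mod 8`
divides `8`, so `N(c) = 2`; but `𝔭` is not principal, as `a² - 15 b² ≢ 2 mod 5`.
-/

open NumberField Polynomial

section QuadraticCoordinates

theorem eq_and_eq_of_add_mul_eq {E L : Type*} [Field E] [Field L] [Algebra E L] {s : L}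
    (hs : s ∉ (algebraMap E L).range) {a b a' b' : E}
    (h : algebraMap E L a + algebraMap E L b * s = algebraMap E L a' + algebraMap E L b' * s) :
    a = a' ∧ b = b' := by
  by_cases hb : b = b'
  · subst hb
    exact ⟨(algebraMap E L).injective (by simpa using h), rfl⟩
  · refine (hs ⟨(a' - a) / (b - b'), ?_⟩).elim
    have hb' : algebraMap E L (b - b') ≠ 0 := by simpa [sub_eq_zero] using hb
    rw [map_div₀, div_eq_iff hb', map_sub, map_sub]
    linear_combination -h

theorem exists_eq_add_mul_of_mem_adjoin {R A : Type*} [CommRing R] [CommRing A] [Algebra R A]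
    {x : A} {c : R} (hx : x ^ 2 = algebraMap R A c) {y : A} (hy : y ∈ Algebra.adjoin R {x}) :
    ∃ a b : R, y = algebraMap R A a + algebraMap R A b * x := by
  induction hy using Algebra.adjoin_induction with
  | mem z hz =>
    rw [Set.mem_singleton_iff.mp hz]
    exact ⟨0, 1, by simp⟩
  | algebraMap q => exact ⟨q, 0, by simp⟩
  | add y z _ _ ihy ihz =>
    obtain ⟨a, b, rfl⟩ := ihy
    obtain ⟨a', b', rfl⟩ := ihz
    exact ⟨a + a', b + b', by simp only [map_add]; ring⟩
  | mul y z _ _ ihy ihz =>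
    obtain ⟨a, b, rfl⟩ := ihy
    obtain ⟨a', b', rfl⟩ := ihz
    refine ⟨a * a' + c * (b * b'), a * b' + b * a', ?_⟩
    simp only [map_add, map_mul]
    linear_combination (algebraMap R A b * algebraMap R A b') * hx

theorem minpoly_eq_of_sq_eq {E L : Type*} [Field E] [Field L] [Algebra E L] {x : L}
    (hx : x ∉ (algebraMap E L).range) {u v : E}
    (h : x ^ 2 = algebraMap E L u * x - algebraMap E L v) :
    minpoly E x = X ^ 2 - C u * X + C v := by
  have hmonic : (X ^ 2 - C u * X + C v).Monic := by monicity!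
  have hroot : aeval x (X ^ 2 - C u * X + C v) = 0 := by
    simp only [map_add, map_sub, map_mul, map_pow, aeval_X, aeval_C]
    linear_combination h
  have hint : IsIntegral E x := ⟨_, hmonic, hroot⟩
  refine (eq_of_monic_of_dvd_of_natDegree_le (minpoly.monic hint) hmonic
    (minpoly.dvd E x hroot) ?_).symm
  calc (X ^ 2 - C u * X + C v).natDegree = 2 := by compute_degree!
    _ ≤ (minpoly E x).natDegree := (minpoly.two_le_natDegree_iff hint).mpr hx

theorem exists_algebraMap_eq_of_sq_eq {R E L : Type*} [CommRing R] [IsDomain R]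
    [IsIntegrallyClosed R] [Field E] [Algebra R E] [IsFractionRing R E] [Field L] [Algebra R L]
    [Algebra E L] [IsScalarTower R E L] {x : L} (hx : IsIntegral R x)
    (hxE : x ∉ (algebraMap E L).range) {u v : E}
    (h : x ^ 2 = algebraMap E L u * x - algebraMap E L v) :
    ∃ u' v' : R, algebraMap R E u' = u ∧ algebraMap R E v' = v ∧
      (minpoly R x).natDegree = 2 := by
  have hmin := (minpoly.isIntegrallyClosed_eq_field_fractions' E hx).symm.trans
    (minpoly_eq_of_sq_eq hxE h)
  refine ⟨-(minpoly R x).coeff 1, (minpoly R x).coeff 0, ?_, ?_, ?_⟩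
  · rw [map_neg, neg_eq_iff_eq_neg]
    simpa using congrArg (coeff · 1) hmin
  · simpa using congrArg (coeff · 0) hmin
  · rw [← natDegree_map_eq_of_injective (IsFractionRing.injective R E), hmin]
    compute_degree!

theorem exists_eq_add_mul_of_adjoin_eq_top {R S : Type*} [CommRing R] [Nontrivial R] [CommRing S]
    [Algebra R S] {x : S} (hx : IsIntegral R x) (hdeg : (minpoly R x).natDegree = 2)
    (hadj : Algebra.adjoin R {x} = ⊤) (y : S) :
    ∃ a b : R, y = algebraMap R S a + algebraMap R S b * x := by
  have hy : y ∈ Algebra.adjoin R {x} := hadj ▸ Algebra.mem_top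
  obtain ⟨f, rfl⟩ := (AlgHom.mem_range _).mp (Algebra.adjoin_singleton_eq_range_aeval R x ▸ hy)
  have hspan := hx.mem_span_pow (y := aeval x f) ⟨f, rfl⟩
  rw [hdeg, Submodule.mem_span_range_iff_exists_fun] at hspan
  obtain ⟨c, hc⟩ := hspan
  refine ⟨c 0, c 1, ?_⟩
  rw [← hc, Fin.sum_univ_two]
  simp [Algebra.smul_def]

end QuadraticCoordinates

theorem Int.mul_self_ne_fifteen (n : ℤ) : n * n ≠ 15 := by
  intro h
  have h1 : -4 < n := by nlinarith
  have h2 : n < 4 := by nlinarith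
  interval_cases n <;> omega

theorem Int.even_and_even_of_sq_sub_fifteen_mul_sq {a b c : ℤ}
    (h : a ^ 2 - 15 * b ^ 2 = 4 * c) : Even a ∧ Even b := by
  have sq_even : ∀ n : ℤ, Even n → n ^ 2 % 4 = 0 := by
    rintro n ⟨k, rfl⟩
    rw [show (k + k) ^ 2 = 4 * k ^ 2 by ring]
    omega
  have sq_odd : ∀ n : ℤ, Odd n → n ^ 2 % 4 = 1 := fun _ => Int.sq_mod_four_eq_one_of_odd
  rcases Int.even_or_odd a with ha | ha <;> rcases Int.even_or_odd b with hb | hb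
  · exact ⟨ha, hb⟩
  · have := sq_even a ha; have := sq_odd b hb; omega
  · have := sq_odd a ha; have := sq_even b hb; omega
  · have := sq_odd a ha; have := sq_odd b hb; omega

theorem Rat.exists_intCast_eq_of_trace_norm {a b : ℚ} {A C : ℤ} (hA : (A : ℚ) = 2 * a)
    (hC : (C : ℚ) = a ^ 2 - 15 * b ^ 2) : ∃ m n : ℤ, (m : ℚ) = a ∧ (n : ℚ) = b := by
  have hsq : (30 * b) ^ 2 = ((15 * (A ^ 2 - 4 * C) : ℤ) : ℚ) := by
    push_cast
    rw [hA, hC]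
    ring
  obtain ⟨m, hm⟩ : ∃ m : ℤ, (m : ℚ) = 30 * b := by
    have : IsIntegral ℤ (30 * b) := .of_pow two_pos (hsq ▸ isIntegral_algebraMap)
    simpa using IsIntegrallyClosed.isIntegral_iff.mp this
  have hmZ : m ^ 2 = 15 * (A ^ 2 - 4 * C) := by exact_mod_cast hm ▸ hsq
  obtain ⟨k, rfl⟩ : 15 ∣ m := by
    have h3 : 3 ∣ m :=
      Int.prime_three.dvd_of_dvd_pow (n := 2) ⟨5 * (A ^ 2 - 4 * C), by rw [hmZ]; ring⟩
    have h5 : 5 ∣ m := (Nat.prime_iff_prime_int.mp Nat.prime_five).dvd_of_dvd_pow (n := 2)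
      ⟨3 * (A ^ 2 - 4 * C), by rw [hmZ]; ring⟩
    omega
  obtain ⟨⟨a', rfl⟩, ⟨b', rfl⟩⟩ :=
    Int.even_and_even_of_sq_sub_fifteen_mul_sq (a := A) (b := k) (c := C) (by linarith)
  push_cast at hA hm
  exact ⟨a', b', by linarith, by linarith⟩

namespace Zsqrtd

theorem norm_ne_two (z : ℤ√15) : z.norm ≠ 2 := by
  intro h
  have h5 := congrArg (Int.cast : ℤ → ZMod 5) (z.norm_def.symm.trans h)
  push_cast at h5
  generalize (z.re : ZMod 5) = a at h5
  generalize (z.im : ZMod 5) = b at h5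
  revert a b
  decide

theorem norm_emod_eight_of_odd {z : ℤ√15} (hre : Odd z.re) (him : Odd z.im) :
    z.norm % 8 = 2 := by
  obtain ⟨k, hk⟩ := hre
  obtain ⟨l, hl⟩ := him
  obtain ⟨m, hm⟩ := Int.even_mul_succ_self k
  obtain ⟨n, hn⟩ := Int.even_mul_succ_self l
  have : z.norm = 8 * (m - 15 * n) - 14 := by
    rw [norm_def, hk, hl]
    linear_combination 4 * hm - 60 * hn
  omega

theorem sq_mul_sub_ne_neg_two (c U V : ℤ√15) : c ^ 2 * (U ^ 2 - 4 * V) ≠ -2 := by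
  intro h
  have hx : (c * U) ^ 2 + 2 = 4 * (c ^ 2 * V) := by linear_combination h
  generalize c * U = x at hx
  generalize c ^ 2 * V = y at hx
  have h4 := congrArg (fun z : ℤ√15 => ((z.re : ℤ) : ZMod 4)) hx
  simp only [sq, re_add, re_mul, re_ofNat, im_ofNat] at h4
  push_cast at h4
  generalize (x.re : ZMod 4) = a at h4
  generalize (x.im : ZMod 4) = b at h4
  generalize (y.re : ZMod 4) = a' at h4
  generalize (y.im : ZMod 4) = b' at h4
  revert a b a' b'
  decide

theorem sq_mul_sub_ne_neg_eight {c d : ℤ√15} (hd : c * (1 + sqrtd) = 2 * d) (U V : ℤ√15) :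
    c ^ 2 * (U ^ 2 - 4 * V) ≠ -8 := by
  intro h
  have hpar : c.re % 2 = c.im % 2 := by
    have hre := congrArg re hd
    have him := congrArg im hd
    simp only [re_mul, im_mul, re_add, im_add, re_one, im_one, re_sqrtd, im_sqrtd, re_ofNat,
      im_ofNat] at hre him
    omega
  rcases Int.even_or_odd c.re with ⟨k, hk⟩ | hre
  · obtain ⟨l, hl⟩ : Even c.im := Int.even_iff.mpr (by omega)
    refine sq_mul_sub_ne_neg_two ⟨k, l⟩ U V ?_
    have h4 : 4 * ((⟨k, l⟩ : ℤ√15) ^ 2 * (U ^ 2 - 4 * V)) = 4 * -2 := by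
      rw [show c = 2 * ⟨k, l⟩ by
        ext <;> simp only [hk, hl, re_mul, im_mul, re_ofNat, im_ofNat, Nat.cast_ofNat,
          mul_zero, zero_mul, add_zero] <;> ring] at h
      linear_combination h
    generalize (⟨k, l⟩ : ℤ√15) ^ 2 * (U ^ 2 - 4 * V) = z at h4
    obtain ⟨hre, him⟩ := Zsqrtd.ext_iff.mp h4
    simp only [re_mul, im_mul, re_neg, im_neg, re_ofNat, im_ofNat] at hre him
    ext <;> simp only [re_neg, im_neg, re_ofNat, im_ofNat] <;> omega
  · have him : Odd c.im := Int.odd_iff.mpr (by have := Int.odd_iff.mp hre; omega)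
    have hnorm : c.norm ^ 2 * (U ^ 2 - 4 * V).norm = 8 ^ 2 := by
      have := congrArg norm h
      rwa [norm_mul, sq, norm_mul, ← sq] at this
    have hdvd : c.norm ∣ 8 := (Int.pow_dvd_pow_iff two_ne_zero).mp (Dvd.intro _ hnorm)
    have h8 := norm_emod_eight_of_odd hre him
    have h2 := norm_ne_two c
    have hle := Int.le_of_dvd (by norm_num) hdvd
    have hge := Int.le_of_dvd (by norm_num) (Int.neg_dvd.mpr hdvd)
    have : c.norm = -6 := by omega
    rw [this] at hdvd
    norm_num at hdvd

end Zsqrtd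

section SqrtFifteen

variable {F : Type*} [Field F] {t : F}

def sqrtFifteenHom (ht : t ^ 2 = 15) : ℤ√15 →+* F :=
  Zsqrtd.lift ⟨t, by rw [← sq, ht]; norm_num⟩

@[simp]
theorem sqrtFifteenHom_sqrtd (ht : t ^ 2 = 15) : sqrtFifteenHom ht Zsqrtd.sqrtd = t := by
  simp [sqrtFifteenHom]

variable [CharZero F]

theorem sqrtFifteenHom_injective (ht : t ^ 2 = 15) : Function.Injective (sqrtFifteenHom ht) :=
  Zsqrtd.lift_injective _ fun n h => n.mul_self_ne_fifteen h.symm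

theorem notMem_range_algebraMap_rat_of_sq_eq_fifteen (ht : t ^ 2 = 15) :
    t ∉ (algebraMap ℚ F).range := by
  rintro ⟨q, rfl⟩
  have hq : q * q = ((15 : ℤ) : ℚ) := (algebraMap ℚ F).injective (by simpa [← sq] using ht)
  obtain ⟨n, hn⟩ := Rat.isSquare_intCast_iff.mp ⟨q, hq.symm⟩
  exact n.mul_self_ne_fifteen hn.symm

theorem exists_sqrtFifteenHom_eq_of_isIntegral (ht : t ^ 2 = 15)
    (hgen : Algebra.adjoin ℚ {t} = ⊤) {x : F} (hx : IsIntegral ℤ x) :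
    ∃ z, sqrtFifteenHom ht z = x := by
  obtain ⟨a, b, rfl⟩ := exists_eq_add_mul_of_mem_adjoin (c := 15) (by simpa using ht)
    (hgen ▸ Algebra.mem_top : x ∈ Algebra.adjoin ℚ {t})
  by_cases hb : b = 0
  · subst hb
    obtain ⟨m, rfl⟩ := IsIntegrallyClosed.isIntegral_iff.mp (by simpa using hx)
    exact ⟨m, by simp [sqrtFifteenHom]⟩
  · have hxQ : algebraMap ℚ F a + algebraMap ℚ F b * t ∉ (algebraMap ℚ F).range := by
      rintro ⟨q, hq⟩
      exact hb (eq_and_eq_of_add_mul_eq (notMem_range_algebraMap_rat_of_sq_eq_fifteen ht)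
        (a' := q) (b' := 0) (hq.symm.trans (by simp))).2
    obtain ⟨A, C, hA, hC, -⟩ := exists_algebraMap_eq_of_sq_eq (u := 2 * a)
      (v := a ^ 2 - 15 * b ^ 2) hx hxQ (by
        simp only [map_mul, map_sub, map_pow, map_ofNat]
        linear_combination (algebraMap ℚ F b) ^ 2 * ht)
    obtain ⟨m, n, rfl, rfl⟩ :=
      Rat.exists_intCast_eq_of_trace_norm (by simpa using hA) (by simpa using hC)
    exact ⟨⟨m, n⟩, by simp [sqrtFifteenHom]⟩

theorem notMem_range_of_sq_eq_neg_two {K : Type*} [Field K] [Algebra F K]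
    (ht : t ^ 2 = 15) (hgen : Algebra.adjoin ℚ {t} = ⊤) {s : K} (hs : s ^ 2 = -2) :
    s ∉ (algebraMap F K).range := by
  rintro ⟨x, rfl⟩
  have hx : x ^ 2 = -2 := (algebraMap F K).injective (by rw [map_pow, hs, map_neg, map_ofNat])
  have hx2 : IsIntegral ℤ (x ^ 2) := by
    simpa [hx] using isIntegral_intCast (R := ℤ) (B := F) (-2)
  obtain ⟨z, rfl⟩ := exists_sqrtFifteenHom_eq_of_isIntegral ht hgen (.of_pow two_pos hx2)
  have hz : z ^ 2 = -2 := sqrtFifteenHom_injective ht (by rw [map_pow, hx, map_neg, map_ofNat])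
  have hre := congrArg Zsqrtd.re hz
  simp only [sq, Zsqrtd.re_mul, Zsqrtd.re_neg, Zsqrtd.re_ofNat, Nat.cast_ofNat] at hre
  nlinarith [mul_self_nonneg z.re, mul_self_nonneg z.im]

theorem sq_sub_four_mul_ne_neg_eight_mul_sq (ht : t ^ 2 = 15) (hgen : Algebra.adjoin ℚ {t} = ⊤)
    {c d U V w : F} (hc : IsIntegral ℤ c) (hd : IsIntegral ℤ d) (hU : IsIntegral ℤ U)
    (hV : IsIntegral ℤ V) (hcw : c * w = 1) (hdw : d * w = (1 + t) / 2) :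
    U ^ 2 - 4 * V ≠ -8 * w ^ 2 := by
  intro h
  obtain ⟨c, rfl⟩ := exists_sqrtFifteenHom_eq_of_isIntegral ht hgen hc
  obtain ⟨d, rfl⟩ := exists_sqrtFifteenHom_eq_of_isIntegral ht hgen hd
  obtain ⟨U, rfl⟩ := exists_sqrtFifteenHom_eq_of_isIntegral ht hgen hU
  obtain ⟨V, rfl⟩ := exists_sqrtFifteenHom_eq_of_isIntegral ht hgen hV
  set ι := sqrtFifteenHom ht
  refine Zsqrtd.sq_mul_sub_ne_neg_eight (c := c) (d := d) (sqrtFifteenHom_injective ht ?_) U V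
    (sqrtFifteenHom_injective ht ?_)
  · simp only [map_mul, map_add, map_one, map_ofNat, sqrtFifteenHom_sqrtd]
    linear_combination (2 * ι d) * hcw - (2 * ι c) * hdw
  · simp only [map_mul, map_sub, map_pow, map_neg, map_ofNat]
    linear_combination (ι c) ^ 2 * h - 8 * (ι c * w + 1) * hcw

end SqrtFifteen

section RelativeQuadratic

variable {F K : Type*} [Field F] [Field K] [Algebra F K]

theorem isIntegral_one_add_div_two_mul [CharZero K] {r s : K} (hr : r ^ 2 = 15)
    (hs : s ^ 2 = -2) : IsIntegral ℤ ((1 + r) / 2 * s) := by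
  have hrZ : IsIntegral ℤ r :=
    .of_pow two_pos (by simpa [hr] using isIntegral_natCast (R := ℤ) (B := K) 15)
  have hsq : ((1 + r) / 2 * s) ^ 2 = -8 - r := by
    linear_combination (1 + r) ^ 2 / 4 * hs - hr / 2
  exact .of_pow two_pos (by simpa [hsq] using (isIntegral_intCast (-8)).sub hrZ)

theorem mem_adjoin_of_adjoin_rat_eq_top [CharZero F] [CharZero K] {r s : K} {t : F}
    (hrt : algebraMap F K t = r) (hgen : Algebra.adjoin ℚ {r, s} = ⊤) (y : K) :
    y ∈ Algebra.adjoin F {s} := by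
  have hle : Algebra.adjoin ℚ {r, s} ≤ (Algebra.adjoin F {s}).restrictScalars ℚ := by
    refine Algebra.adjoin_le ?_
    rintro _ (rfl | rfl)
    · rw [← hrt]
      exact Subalgebra.algebraMap_mem _ t
    · exact (Subalgebra.mem_restrictScalars (R := ℚ)).mpr (Algebra.subset_adjoin rfl)
  have hy : y ∈ Algebra.adjoin ℚ {r, s} := by rw [hgen]; exact Algebra.mem_top
  exact (Subalgebra.mem_restrictScalars (R := ℚ)).mp (hle hy)

theorem coe_notMem_range_of_adjoin_eq_top {α : 𝓞 K} (hadj : Algebra.adjoin (𝓞 F) {α} = ⊤)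
    {y : 𝓞 K} (hy : (y : K) ∉ (algebraMap F K).range) : (α : K) ∉ (algebraMap F K).range := by
  rintro ⟨P, hP⟩
  have hPint : IsIntegral ℤ P :=
    (isIntegral_algebraMap_iff (algebraMap F K).injective).mp (hP ▸ α.isIntegral_coe)
  have hα : α = algebraMap (𝓞 F) (𝓞 K) ⟨P, hPint⟩ := RingOfIntegers.coe_injective hP.symm
  have hbot : Algebra.adjoin (𝓞 F) {α} ≤ ⊥ :=
    Algebra.adjoin_le (Set.singleton_subset_iff.mpr (Algebra.mem_bot.mpr ⟨_, hα.symm⟩))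
  obtain ⟨g, hg⟩ := Algebra.mem_bot.mp (hbot (hadj ▸ Algebra.mem_top : y ∈ _))
  exact hy ⟨g, by rw [← hg]; rfl⟩

theorem exists_mul_eq_of_forall_eq_add_mul {s : K} (hs : s ∉ (algebraMap F K).range) {α : 𝓞 K}
    {P w : F} (hα : (α : K) = algebraMap F K P + algebraMap F K w * s)
    (hspan : ∀ y : 𝓞 K, ∃ g h : 𝓞 F,
      y = algebraMap (𝓞 F) (𝓞 K) g + algebraMap (𝓞 F) (𝓞 K) h * α)
    {y : 𝓞 K} {A B : F} (hy : (y : K) = algebraMap F K A + algebraMap F K B * s) :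
    ∃ h : 𝓞 F, (h : F) * w = B := by
  obtain ⟨g, h, hgh⟩ := hspan y
  refine ⟨h, (eq_and_eq_of_add_mul_eq hs (a := g + h * P) (a' := A) ?_).2⟩
  rw [← hy, hgh]
  simp only [map_add, map_mul, RingOfIntegers.coe_eq_algebraMap,
    ← IsScalarTower.algebraMap_apply] at hα ⊢
  rw [IsScalarTower.algebraMap_apply (𝓞 F) F K, IsScalarTower.algebraMap_apply (𝓞 F) F K, hα]
  ring

end RelativeQuadratic

/-- Let `K = ℚ(√15, √-2)` with maximal totally real subfield
`F = ℚ(√15)`.  Then there is no `α ∈ 𝓞 K` with `𝓞 K = 𝓞 F[α]`. -/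
theorem stmt8 (F K : Type*) [Field F] [Field K] [NumberField F] [NumberField K]
    [Algebra F K]
    (r s : K) (hr : r ^ 2 = 15) (hs : s ^ 2 = -2)
    (hKgen : Algebra.adjoin ℚ ({r, s} : Set K) = ⊤)
    (t : F) (ht : t ^ 2 = 15) (hFgen : Algebra.adjoin ℚ ({t} : Set F) = ⊤)
    (hrt : algebraMap F K t = r) :
    ¬ ∃ α : 𝓞 K, Algebra.adjoin (𝓞 F) ({α} : Set (𝓞 K)) = ⊤ := by
  rintro ⟨α, hadj⟩
  have hsF := notMem_range_of_sq_eq_neg_two ht hFgen hs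
  obtain ⟨P, w, hα⟩ := exists_eq_add_mul_of_mem_adjoin (c := -2)
    (by rw [hs, map_neg, map_ofNat]) (mem_adjoin_of_adjoin_rat_eq_top hrt hKgen (α : K))
  have hsZ : IsIntegral ℤ s :=
    .of_pow two_pos (by simpa [hs] using isIntegral_intCast (R := ℤ) (B := K) (-2))
  obtain ⟨U, V, hU, hV, hdeg⟩ := exists_algebraMap_eq_of_sq_eq (R := 𝓞 F)
    (RingOfIntegers.isIntegral_coe α).tower_top
    (coe_notMem_range_of_adjoin_eq_top hadj (y := ⟨s, hsZ⟩) hsF) (u := 2 * P)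
    (v := P ^ 2 + 2 * w ^ 2) (by
      rw [← RingOfIntegers.coe_eq_algebraMap, hα]
      simp only [map_mul, map_add, map_pow, map_ofNat]
      linear_combination (algebraMap F K w) ^ 2 * hs)
  have hspan := exists_eq_add_mul_of_adjoin_eq_top (Algebra.IsIntegral.isIntegral α)
    (by rwa [← minpoly.algebraMap_eq RingOfIntegers.coe_injective]) hadj
  obtain ⟨c, hc⟩ := exists_mul_eq_of_forall_eq_add_mul hsF hα hspan (y := ⟨s, hsZ⟩) (A := 0)
    (B := 1) ((RingOfIntegers.coe_mk hsZ).trans (by simp))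
  obtain ⟨d, hd⟩ := exists_mul_eq_of_forall_eq_add_mul hsF hα hspan
    (y := ⟨_, isIntegral_one_add_div_two_mul hr hs⟩) (A := 0) (B := (1 + t) / 2)
    (by rw [map_zero, zero_add, map_div₀, map_add, map_one, map_ofNat, hrt]; rfl)
  exact sq_sub_four_mul_ne_neg_eight_mul_sq ht hFgen c.isIntegral_coe d.isIntegral_coe
    U.isIntegral_coe V.isIntegral_coe hc hd (by rw [hU, hV]; ring)
end

section
/- Let K be a CM field of degree 2g with g ≥ 2, with maximal totally real subfield F, and fix γ ∈ O_K with O_K = O_F[γ] and η ∈ O_F with ℤ[η] = O_F. For each unit u ∈ O_F^×, there is at most one a ∈ ℤ such that α = (u(γ - γ̄) + η + a)/2 satisfies αᾱ ∈ ℚ. -/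
/-!
If two integers `a₁ ≠ a₂` both worked, write `B = u(γ - γ̄)` (so `B̄ = -B`) and `E = η`
(so `Ē = E`). Then `αᾱ = ((E + a)² - B²)/4`, and subtracting the two relations gives
`(a₁ - a₂)(2E + a₁ + a₂) ∈ ℚ`, so `η ∈ ℚ`. As `η` generates `𝓞 F` as a ring, all of `𝓞 F`,
hence its fraction field `F`, would lie in `ℚ`, contradicting `[F : ℚ] = g ≥ 2`.
-/

open NumberField

theorem RingHom.apply_apply_eq_self_of_conj {K : Type*} [Field K] (σ : K →+* K)
    (φ : K →+* ℂ) (hσ : ∀ x, φ (σ x) = starRingEnd ℂ (φ x)) (x : K) : σ (σ x) = x :=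
  φ.injective (by rw [hσ, hσ, Complex.conj_conj])

section NormOfHalf

variable {K : Type*} [Field K] [CharZero K] (σ : K →+* K) {B E : K}

theorem mul_map_half_eq (hB : σ B = -B) (hE : σ E = E) (a : ℤ) :
    (B + E + a) / 2 * σ ((B + E + a) / 2) = ((E + a) ^ 2 - B ^ 2) / 4 := by
  rw [map_div₀, map_add, map_add, hB, hE, map_intCast, map_ofNat]
  ring

theorem exists_eq_ratCast_of_mul_map_half_eq (hB : σ B = -B) (hE : σ E = E) {a₁ a₂ : ℤ}
    (hne : a₁ ≠ a₂) {q₁ q₂ : ℚ}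
    (h₁ : (B + E + a₁) / 2 * σ ((B + E + a₁) / 2) = q₁)
    (h₂ : (B + E + a₂) / 2 * σ ((B + E + a₂) / 2) = q₂) :
    ∃ r : ℚ, E = r := by
  rw [mul_map_half_eq σ hB hE] at h₁ h₂
  have hdiff : ((a₁ : K) - a₂) * (2 * E + a₁ + a₂) = 4 * ((q₁ : K) - q₂) := by
    linear_combination 4 * h₁ - 4 * h₂
  have ha : ((a₁ : K) - a₂) ≠ 0 := sub_ne_zero.mpr (Int.cast_injective.ne hne)
  refine ⟨(4 * (q₁ - q₂) / (a₁ - a₂) - a₁ - a₂) / 2, ?_⟩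
  push_cast
  field_simp
  linear_combination hdiff

end NormOfHalf

theorem RingHom.apply_mem_of_adjoin_int_eq_top {R A : Type*} [Ring R] [Ring A] (f : R →+* A)
    (S : Subring A) {η : R} (hη : Algebra.adjoin ℤ {η} = ⊤) (h : f η ∈ S) (x : R) :
    f x ∈ S := by
  have hle : Algebra.adjoin ℤ {η} ≤ subalgebraOfSubring (S.comap f) :=
    Algebra.adjoin_le (by simpa using h)
  exact hle (hη ▸ Algebra.mem_top)

theorem IntermediateField.eq_top_of_algebraMap_mem {k R L : Type*} [Field k] [CommRing R]
    [Field L] [Algebra k L] [Algebra R L] [IsFractionRing R L] (E : IntermediateField k L)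
    (h : ∀ x : R, algebraMap R L x ∈ E) : E = ⊤ := by
  refine eq_top_iff.mpr fun z _ ↦ ?_
  obtain ⟨a, b, -, rfl⟩ := IsFractionRing.div_surjective R z
  exact div_mem (h a) (h b)

theorem NumberField.finrank_eq_one_of_adjoin_int_eq_top {F : Type*} [Field F] [NumberField F]
    {η : 𝓞 F} (hη : Algebra.adjoin ℤ {η} = ⊤)
    (hrat : (η : F) ∈ (⊥ : IntermediateField ℚ F)) : Module.finrank ℚ F = 1 := by
  rw [← IntermediateField.bot_eq_top_iff_finrank_eq_one]
  exact IntermediateField.eq_top_of_algebraMap_mem _ <|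
    (algebraMap (𝓞 F) F).apply_mem_of_adjoin_int_eq_top
      (⊥ : IntermediateField ℚ F).toSubfield.toSubring hη hrat

theorem stmt10_general (g : ℕ) (hg : 2 ≤ g)
    (F K : Type*) [Field F] [Field K] [NumberField F] [NumberField K] [Algebra F K]
    (hgF : Module.finrank ℚ F = g)
    (c : K ≃ₐ[F] K)
    (hc : ∀ φ : K →+* ℂ, ∀ x : K, φ (c x) = (starRingEnd ℂ) (φ x))
    (γ : 𝓞 K)
    (η : 𝓞 F) (hη : Algebra.adjoin ℤ ({η} : Set (𝓞 F)) = ⊤)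
    (u : (𝓞 F)ˣ) :
    ∀ a₁ a₂ : ℤ,
      (∃ q : ℚ,
        ((algebraMap F K (algebraMap (𝓞 F) F (u : 𝓞 F)) *
              (algebraMap (𝓞 K) K γ - c (algebraMap (𝓞 K) K γ)) +
            algebraMap F K (algebraMap (𝓞 F) F η) + (a₁ : K)) / 2) *
          c ((algebraMap F K (algebraMap (𝓞 F) F (u : 𝓞 F)) *
              (algebraMap (𝓞 K) K γ - c (algebraMap (𝓞 K) K γ)) +
            algebraMap F K (algebraMap (𝓞 F) F η) + (a₁ : K)) / 2) = (q : K)) →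
      (∃ q : ℚ,
        ((algebraMap F K (algebraMap (𝓞 F) F (u : 𝓞 F)) *
              (algebraMap (𝓞 K) K γ - c (algebraMap (𝓞 K) K γ)) +
            algebraMap F K (algebraMap (𝓞 F) F η) + (a₂ : K)) / 2) *
          c ((algebraMap F K (algebraMap (𝓞 F) F (u : 𝓞 F)) *
              (algebraMap (𝓞 K) K γ - c (algebraMap (𝓞 K) K γ)) +
            algebraMap F K (algebraMap (𝓞 F) F η) + (a₂ : K)) / 2) = (q : K)) →
      a₁ = a₂ := by
  intro a₁ a₂ ⟨q₁, h₁⟩ ⟨q₂, h₂⟩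
  by_contra hne
  obtain ⟨φ⟩ := (inferInstance : Nonempty (K →+* ℂ))
  set U : K := algebraMap F K (algebraMap (𝓞 F) F (u : 𝓞 F))
  set G : K := algebraMap (𝓞 K) K γ
  have hcc : ∀ x, c (c x) = x := (c : K →+* K).apply_apply_eq_self_of_conj φ (hc φ)
  have hB : c (U * (G - c G)) = -(U * (G - c G)) := by
    rw [map_mul, map_sub, c.commutes, hcc]
    ring
  obtain ⟨r, hr⟩ :=
    exists_eq_ratCast_of_mul_map_half_eq (c : K →+* K) hB (c.commutes _) hne h₁ h₂
  have hrat : algebraMap (𝓞 F) F η ∈ (⊥ : IntermediateField ℚ F) :=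
    IntermediateField.mem_bot.mpr ⟨r, (algebraMap F K).injective (by simp [hr])⟩
  have hF₁ := NumberField.finrank_eq_one_of_adjoin_int_eq_top hη hrat
  omega

/-- Let `K` be a CM field of degree `2g`, `g ≥ 2`, with maximal
totally real subfield `F` and complex conjugation `c`.  Fix `γ ∈ 𝓞 K` with
`𝓞 K = 𝓞 F[γ]` and `η ∈ 𝓞 F` with `ℤ[η] = 𝓞 F`.  For each unit `u ∈ 𝓞 F ˣ` there
is at most one `a ∈ ℤ` such that `α = (u(γ - γ̄) + η + a)/2` satisfies `α·ᾱ ∈ ℚ`. -/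
theorem stmt10 (g : ℕ) (hg : 2 ≤ g)
    (F K : Type*) [Field F] [Field K] [NumberField F] [NumberField K] [Algebra F K]
    (hF : TotallyReal F) (hK : TotallyImaginary K)
    (hgF : Module.finrank ℚ F = g) (h2 : Module.finrank F K = 2)
    (c : K ≃ₐ[F] K)
    (hc : ∀ φ : K →+* ℂ, ∀ x : K, φ (c x) = (starRingEnd ℂ) (φ x))
    (γ : 𝓞 K) (hγ : Algebra.adjoin (𝓞 F) ({γ} : Set (𝓞 K)) = ⊤)
    (η : 𝓞 F) (hη : Algebra.adjoin ℤ ({η} : Set (𝓞 F)) = ⊤)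
    (u : (𝓞 F)ˣ) :
    ∀ a₁ a₂ : ℤ,
      (∃ q : ℚ,
        ((algebraMap F K (algebraMap (𝓞 F) F (u : 𝓞 F)) *
              (algebraMap (𝓞 K) K γ - c (algebraMap (𝓞 K) K γ)) +
            algebraMap F K (algebraMap (𝓞 F) F η) + (a₁ : K)) / 2) *
          c ((algebraMap F K (algebraMap (𝓞 F) F (u : 𝓞 F)) *
              (algebraMap (𝓞 K) K γ - c (algebraMap (𝓞 K) K γ)) +
            algebraMap F K (algebraMap (𝓞 F) F η) + (a₁ : K)) / 2) = (q : K)) →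
      (∃ q : ℚ,
        ((algebraMap F K (algebraMap (𝓞 F) F (u : 𝓞 F)) *
              (algebraMap (𝓞 K) K γ - c (algebraMap (𝓞 K) K γ)) +
            algebraMap F K (algebraMap (𝓞 F) F η) + (a₂ : K)) / 2) *
          c ((algebraMap F K (algebraMap (𝓞 F) F (u : 𝓞 F)) *
              (algebraMap (𝓞 K) K γ - c (algebraMap (𝓞 K) K γ)) +
            algebraMap F K (algebraMap (𝓞 F) F η) + (a₂ : K)) / 2) = (q : K)) →
      a₁ = a₂ :=
  stmt10_general g hg F K hgF c hc γ η hη u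
end

section
/- Let F be a real quadratic field and η ∈ O_F \ ℤ. There exists a constant C₂ > 0 depending only on η such that for all b, c ∈ ℤ with c ≠ 0, the element β = b + cη satisfies h(β) ≤ C₂·|c|·√|N_{F/ℚ}(β)|. In fact one may take C₂ = h(η) + (|t| + √(t² + 4(|n_η| + 1)))/2, where t = Tr_{F/ℚ}(η) and n_η = N_{F/ℚ}(η). -/
open NumberField

/-- The height of an element of a number field: the maximum of the absolute values
of its images under all complex embeddings. -/
noncomputable def height (F : Type*) [Field F] [NumberField F] (α : F) : ℝ :=
  ⨆ ρ : F →+* ℂ, ‖ρ α‖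

/-!
Write `β = b + cη`, `t = Tr η`, `n = N η`. In a quadratic field `N β = b² + t b c + n c²`, and
`N β` is a nonzero integer because `η ∉ ℚ`. With `K = |c| √|N β| ≥ |c|` this gives
`b² ≤ |t| K |b| + (|n| + 1) K²`, so `|b|` is at most `K` times the positive root of
`X² = |t| X + |n| + 1`. Together with `h(β) ≤ |b| + |c| h(η)` this is the bound.
-/

theorem le_mul_of_sq_le_mul_add {X a d K : ℝ} (hK : 0 ≤ K) (hd : 0 ≤ d)
    (h : X ^ 2 ≤ a * K * X + d * K ^ 2) : X ≤ (a + √(a ^ 2 + 4 * d)) / 2 * K := by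
  have hs : √(a ^ 2 + 4 * d) ^ 2 = a ^ 2 + 4 * d := Real.sq_sqrt (by positivity)
  have hs0 := Real.sqrt_nonneg (a ^ 2 + 4 * d)
  by_contra! hX
  nlinarith [mul_nonneg hs0 hK]

theorem abs_le_of_eq_quadratic_form {b c t n N : ℝ} (hN : N = b ^ 2 + t * b * c + n * c ^ 2)
    (hc : 1 ≤ |c|) (hN1 : 1 ≤ |N|) :
    |b| ≤ (|t| + √(t ^ 2 + 4 * (|n| + 1))) / 2 * (|c| * √|N|) := by
  set K := |c| * √|N|
  have hK2 : K ^ 2 = c ^ 2 * |N| := by rw [mul_pow, sq_abs, Real.sq_sqrt (abs_nonneg N)]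
  have hcK : |c| ≤ K := le_mul_of_one_le_right (abs_nonneg c) (Real.one_le_sqrt.mpr hN1)
  have hc2 : 1 ≤ c ^ 2 := by nlinarith [sq_abs c]
  have hb2 : b ^ 2 ≤ |N| + |t| * |c| * |b| + |n| * c ^ 2 := by
    have htbc := neg_abs_le (t * b * c)
    have hnc := neg_abs_le (n * c ^ 2)
    rw [abs_mul, abs_mul] at htbc
    rw [abs_mul, abs_pow, sq_abs] at hnc
    linarith [le_abs_self N]
  have key : |b| ^ 2 ≤ |t| * K * |b| + (|n| + 1) * K ^ 2 := by
    have htK : |t| * |c| * |b| ≤ |t| * K * |b| := by gcongr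
    have hNK : |N| ≤ c ^ 2 * |N| := le_mul_of_one_le_left (abs_nonneg N) hc2
    have hnK : |n| * c ^ 2 ≤ |n| * (c ^ 2 * |N|) :=
      mul_le_mul_of_nonneg_left (le_mul_of_one_le_right (sq_nonneg c) hN1) (abs_nonneg n)
    rw [sq_abs, hK2]
    linarith
  simpa only [sq_abs] using le_mul_of_sq_le_mul_add (by positivity) (by positivity) key

theorem Algebra.norm_algebraMap_add_algebraMap_mul {K L : Type*} [Field K] [Field L]
    [Algebra K L] (h : Module.finrank K L = 2) (a c : K) (x : L) :
    Algebra.norm K (algebraMap K L a + algebraMap K L c * x) =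
      a ^ 2 + Algebra.trace K L x * a * c + Algebra.norm K x * c ^ 2 := by
  have : Module.Finite K L := Module.finite_of_finrank_eq_succ h
  let B := Module.finBasisOfFinrankEq K L h
  rw [Algebra.norm_eq_matrix_det B, Algebra.norm_eq_matrix_det B,
    Algebra.trace_eq_matrix_trace B, map_add, map_mul, AlgHom.commutes, AlgHom.commutes,
    Matrix.det_fin_two, Matrix.det_fin_two, Matrix.trace_fin_two]
  simp only [Matrix.algebraMap_eq_diagonal, Matrix.add_apply, Matrix.diagonal_mul,
    Matrix.diagonal_apply_eq, Matrix.diagonal_apply_ne, Pi.algebraMap_apply, algebraMap_self,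
    RingHom.id_apply, ne_eq, zero_ne_one, one_ne_zero, not_false_eq_true, zero_add]
  ring

section height

variable {F : Type*} [Field F] [NumberField F]

theorem norm_le_height (x : F) (ρ : F →+* ℂ) : ‖ρ x‖ ≤ height F x :=
  le_ciSup (f := fun ρ : F →+* ℂ => ‖ρ x‖) (Set.finite_range _).bddAbove ρ

theorem height_nonneg (x : F) : 0 ≤ height F x :=
  Real.iSup_nonneg fun _ => norm_nonneg _

theorem height_add_le (x y : F) : height F (x + y) ≤ height F x + height F y :=
  Real.iSup_le (fun ρ => (map_add ρ x y ▸ norm_add_le _ _).trans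
    (add_le_add (norm_le_height x ρ) (norm_le_height y ρ)))
    (add_nonneg (height_nonneg x) (height_nonneg y))

theorem height_intCast_mul (n : ℤ) (x : F) : height F (n * x) = |(n : ℝ)| * height F x := by
  simp only [height, map_mul, map_intCast, norm_mul, Complex.norm_intCast,
    Real.mul_iSup_of_nonneg (abs_nonneg _)]

theorem height_intCast_le (n : ℤ) : height F n ≤ |(n : ℝ)| :=
  Real.iSup_le (fun ρ => by rw [map_intCast, Complex.norm_intCast]) (abs_nonneg _)

end height

namespace NumberField.RingOfIntegers

variable {F : Type*} [Field F] [NumberField F]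

theorem exists_intCast_eq_of_ratCast_eq {x : 𝓞 F} {q : ℚ} (h : (x : F) = q) :
    ∃ m : ℤ, (x : F) = m := by
  have hq : IsIntegral ℤ q := by
    rw [← isIntegral_algebraMap_iff (algebraMap ℚ F).injective, eq_ratCast, ← h]
    exact x.isIntegral_coe
  obtain ⟨m, rfl⟩ := IsIntegrallyClosed.isIntegral_iff.mp hq
  exact ⟨m, by simp [h]⟩

theorem one_le_abs_norm {x : 𝓞 F} (hx : x ≠ 0) : 1 ≤ |(Algebra.norm ℚ (x : F) : ℝ)| := by
  rw [← Algebra.coe_norm_int]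
  exact_mod_cast Int.one_le_abs (Algebra.norm_ne_zero_iff.mpr hx)

theorem intCast_add_intCast_mul_ne_zero {η : 𝓞 F} (hη : ¬ ∃ m : ℤ, (η : F) = m) (b : ℤ)
    {c : ℤ} (hc : c ≠ 0) : (b : 𝓞 F) + c * η ≠ 0 := by
  intro h0
  refine hη (exists_intCast_eq_of_ratCast_eq (q := -b / c) ?_)
  have hcF : (c : F) ≠ 0 := Int.cast_ne_zero.mpr hc
  have h0F : (b : F) + c * η = 0 := by simpa using congrArg ((↑) : 𝓞 F → F) h0
  push_cast
  field_simp
  linear_combination h0F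

end NumberField.RingOfIntegers

theorem stmt12_general (F : Type*) [Field F] [NumberField F]
    (h2 : Module.finrank ℚ F = 2)
    (η : 𝓞 F) (hη : ¬ ∃ m : ℤ, algebraMap (𝓞 F) F η = (m : F)) :
    0 < height F (algebraMap (𝓞 F) F η) +
        (|(Algebra.trace ℚ F (algebraMap (𝓞 F) F η) : ℝ)| +
          Real.sqrt ((Algebra.trace ℚ F (algebraMap (𝓞 F) F η) : ℝ) ^ 2 +
            4 * (|(Algebra.norm ℚ (algebraMap (𝓞 F) F η) : ℝ)| + 1))) / 2 ∧
    ∀ b c : ℤ, c ≠ 0 →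
      height F ((b : F) + (c : F) * algebraMap (𝓞 F) F η) ≤
        (height F (algebraMap (𝓞 F) F η) +
          (|(Algebra.trace ℚ F (algebraMap (𝓞 F) F η) : ℝ)| +
            Real.sqrt ((Algebra.trace ℚ F (algebraMap (𝓞 F) F η) : ℝ) ^ 2 +
              4 * (|(Algebra.norm ℚ (algebraMap (𝓞 F) F η) : ℝ)| + 1))) / 2) *
        |(c : ℝ)| *
        Real.sqrt |(Algebra.norm ℚ ((b : F) + (c : F) * algebraMap (𝓞 F) F η) : ℝ)| := by
  refine ⟨add_pos_of_nonneg_of_pos (height_nonneg _) (by positivity), fun b c hc => ?_⟩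
  have hnorm : (Algebra.norm ℚ ((b : F) + c * η) : ℝ) =
      b ^ 2 + (Algebra.trace ℚ F η : ℝ) * b * c + (Algebra.norm ℚ (η : F) : ℝ) * c ^ 2 := by
    have := Algebra.norm_algebraMap_add_algebraMap_mul h2 (b : ℚ) (c : ℚ) (η : F)
    rw [map_intCast, map_intCast] at this
    exact_mod_cast this
  have hN1 : 1 ≤ |(Algebra.norm ℚ ((b : F) + c * η) : ℝ)| := by
    simpa using RingOfIntegers.one_le_abs_norm
      (RingOfIntegers.intCast_add_intCast_mul_ne_zero hη b hc)
  have hb := abs_le_of_eq_quadratic_form hnorm (mod_cast Int.one_le_abs hc) hN1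
  have hcK : |(c : ℝ)| ≤ |(c : ℝ)| * √|(Algebra.norm ℚ ((b : F) + c * η) : ℝ)| :=
    le_mul_of_one_le_right (abs_nonneg _) (Real.one_le_sqrt.mpr hN1)
  calc height F ((b : F) + c * η)
      ≤ height F (b : F) + height F ((c : F) * η) := height_add_le _ _
    _ ≤ |(b : ℝ)| + |(c : ℝ)| * height F η :=
        add_le_add (height_intCast_le b) (height_intCast_mul c _).le
    _ ≤ _ := by linarith [mul_le_mul_of_nonneg_right hcK (height_nonneg (η : F))]

/-- Let `F` be a real quadratic field and `η ∈ 𝓞 F \ ℤ`.  With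
`t = Tr_{F/ℚ}(η)` and `n_η = N_{F/ℚ}(η)`, set
`C₂ = h(η) + (|t| + √(t² + 4(|n_η| + 1)))/2 > 0` (depending only on `η`).  Then for
all `b, c ∈ ℤ` with `c ≠ 0`, the element `β = b + c·η` satisfies
`h(β) ≤ C₂·|c|·√|N_{F/ℚ}(β)|`. -/
theorem stmt12 (F : Type*) [Field F] [NumberField F]
    (h2 : Module.finrank ℚ F = 2) (hF : TotallyReal F)
    (η : 𝓞 F) (hη : ¬ ∃ m : ℤ, algebraMap (𝓞 F) F η = (m : F)) :
    0 < height F (algebraMap (𝓞 F) F η) +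
        (|(Algebra.trace ℚ F (algebraMap (𝓞 F) F η) : ℝ)| +
          Real.sqrt ((Algebra.trace ℚ F (algebraMap (𝓞 F) F η) : ℝ) ^ 2 +
            4 * (|(Algebra.norm ℚ (algebraMap (𝓞 F) F η) : ℝ)| + 1))) / 2 ∧
    ∀ b c : ℤ, c ≠ 0 →
      height F ((b : F) + (c : F) * algebraMap (𝓞 F) F η) ≤
        (height F (algebraMap (𝓞 F) F η) +
          (|(Algebra.trace ℚ F (algebraMap (𝓞 F) F η) : ℝ)| +
            Real.sqrt ((Algebra.trace ℚ F (algebraMap (𝓞 F) F η) : ℝ) ^ 2 +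
              4 * (|(Algebra.norm ℚ (algebraMap (𝓞 F) F η) : ℝ)| + 1))) / 2) *
        |(c : ℝ)| *
        Real.sqrt |(Algebra.norm ℚ ((b : F) + (c : F) * algebraMap (𝓞 F) F η) : ℝ)| :=
  stmt12_general F h2 η hη
end

section
/- Let f₁, ..., f_g ∈ ℚ̄[x,y,z] be homogeneous linear polynomials such that the projective lines {f_i = 0} meet the line at infinity {z = 0} in g pairwise distinct points. Then for any nonzero t ∈ ℚ̄, the homogeneous polynomial t·z^g + f₁·f₂·⋯·f_g is irreducible in ℚ̄[x,y,z]. -/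
/-! Write `F = t z^g + f₁⋯f_g` and `lᵢ = fᵢ(x, y, 0)`, so that `F(x, y, 0) = l₁⋯l_g` with the
`lᵢ` pairwise non-proportional. Modulo `fᵢ` we have `F ≡ t z^g`. After a linear change of
coordinates turning `fᵢ` into `x`, a factorisation `F = G H` with `H` of degree `< g` gives
`G(0, y, z) H(0, y, z) = t z^g`, which forces `z ∣ G(0, y, z)`: otherwise `z^g ∣ H(0, y, z)`,
too many factors for the degree of `H`. Hence `G ∈ (fᵢ, z)`, that is `lᵢ ∣ G(x, y, 0)`.
If neither factor is a unit this applies to both `G` and `H`, so `lᵢ² ∣ l₁⋯l_g`, which is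
ruled out by evaluating at the point `(-bᵢ, aᵢ, 0)` where `fᵢ` meets the line at infinity. -/

open MvPolynomial

namespace MvPolynomial
variable {R σ τ : Type*} [CommRing R]

theorem totalDegree_aeval_le {f : σ → MvPolynomial τ R} (hf : ∀ i, (f i).totalDegree ≤ 1)
    (p : MvPolynomial σ R) : (aeval f p).totalDegree ≤ p.totalDegree := by
  conv_lhs => rw [p.as_sum, map_sum]
  refine (totalDegree_finsetSum _ _).trans (Finset.sup_le fun m hm => ?_)
  calc (aeval f (monomial m (coeff m p))).totalDegree
      ≤ ∑ i ∈ m.support, (f i ^ m i).totalDegree := by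
        rw [aeval_monomial, algebraMap_eq]
        refine (totalDegree_mul _ _).trans ?_
        rw [totalDegree_C, zero_add]
        exact totalDegree_finsetProd _ _
    _ ≤ ∑ i ∈ m.support, m i := Finset.sum_le_sum fun i _ =>
        (totalDegree_pow _ _).trans (by simpa using Nat.mul_le_mul_left (m i) (hf i))
    _ ≤ p.totalDegree := le_totalDegree hm

variable [DecidableEq σ]

noncomputable def killVar (j : σ) : MvPolynomial σ R →ₐ[R] MvPolynomial σ R :=
  aeval (Function.update X j 0)

@[simp] lemma killVar_X_self (j : σ) : killVar j (X j : MvPolynomial σ R) = 0 := by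
  simp [killVar]

@[simp] lemma killVar_X_of_ne {i j : σ} (h : i ≠ j) :
    killVar j (X i : MvPolynomial σ R) = X i := by
  simp [killVar, h]

@[simp] lemma killVar_C (j : σ) (r : R) : killVar j (C r : MvPolynomial σ R) = C r := by
  simp [killVar]

lemma totalDegree_killVar_le (j : σ) (p : MvPolynomial σ R) :
    (killVar j p).totalDegree ≤ p.totalDegree := by
  refine totalDegree_aeval_le (fun i => ?_) p
  rcases eq_or_ne i j with rfl | h
  · simp
  · simpa [h, X] using totalDegree_monomial_le (Finsupp.single i 1) (1 : R)

lemma X_dvd_sub_killVar (j : σ) (p : MvPolynomial σ R) : X j ∣ p - killVar j p := by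
  induction p using MvPolynomial.induction_on with
  | C r => simp
  | add p q hp hq => simpa [add_sub_add_comm] using dvd_add hp hq
  | mul_X p i hp =>
    have hi : X j ∣ X i - killVar j (X i : MvPolynomial σ R) := by
      rcases eq_or_ne i j with rfl | h <;> simp [*]
    rw [map_mul]
    convert dvd_add (dvd_mul_of_dvd_left hp (X i)) (dvd_mul_of_dvd_left hi (killVar j p)) using 1
    ring

variable [IsDomain R]

lemma X_dvd_killVar_of_dvd_mul_sub {i j : σ} (hij : i ≠ j) {t : R} (ht : t ≠ 0) {g : ℕ}
    {G H : MvPolynomial σ R} (hGH : X i ∣ G * H - C t * X j ^ g) (hH : H.totalDegree < g) :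
    X i ∣ killVar j G := by
  have hprod : killVar i G * killVar i H = C t * X j ^ g := by
    obtain ⟨P, hP⟩ := hGH
    have := congrArg (killVar i) hP
    simp only [map_sub, map_mul, map_pow, killVar_C, killVar_X_self, killVar_X_of_ne hij.symm,
      zero_mul] at this
    exact sub_eq_zero.mp this
  by_cases hz : X j ∣ killVar i G
  · obtain ⟨q, hq⟩ := hz
    simpa [hq, killVar_X_of_ne hij] using map_dvd (killVar j) (X_dvd_sub_killVar i G)
  · have hdvd : X j ^ g ∣ killVar i H :=
      X_prime.pow_dvd_of_dvd_mul_left g hz ⟨C t, by rw [hprod, mul_comm]⟩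
    have hne : killVar i H ≠ 0 := by
      rintro h
      rw [h, mul_zero] at hprod
      exact mul_ne_zero (C_ne_zero.mpr ht) (pow_ne_zero g (X_ne_zero j)) hprod.symm
    have hdeg := totalDegree_le_of_dvd_of_isDomain hdvd hne
    rw [totalDegree_X_pow] at hdeg
    have := totalDegree_killVar_le i H
    omega

end MvPolynomial

section LinearForms

variable {K : Type*} [Field K]

noncomputable def linForm (a b c : K) : MvPolynomial (Fin 3) K :=
  C a * X 0 + C b * X 1 + C c * X 2

lemma isHomogeneous_linForm (a b c : K) : (linForm a b c).IsHomogeneous 1 :=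
  ((isHomogeneous_C_mul_X a 0).add (isHomogeneous_C_mul_X b 1)).add (isHomogeneous_C_mul_X c 2)

@[simp] lemma eval_linForm (a b c : K) (x : Fin 3 → K) :
    eval x (linForm a b c) = a * x 0 + b * x 1 + c * x 2 := by
  simp [linForm]

@[simp] lemma killVar_two_linForm (a b c : K) : killVar 2 (linForm a b c) = linForm a b 0 := by
  simp [linForm, killVar_X_of_ne (show (0 : Fin 3) ≠ 2 by decide),
    killVar_X_of_ne (show (1 : Fin 3) ≠ 2 by decide)]

lemma linForm_ne_zero {a b : K} (hab : ¬(a = 0 ∧ b = 0)) (c : K) : linForm a b c ≠ 0 := by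
  intro h
  refine hab ⟨?_, ?_⟩
  · simpa using congrArg (eval ![1, 0, 0]) h
  · simpa using congrArg (eval ![0, 1, 0]) h

lemma exists_mul_sub_mul_eq_one {a b : K} (hab : ¬(a = 0 ∧ b = 0)) :
    ∃ u v, a * v - b * u = 1 := by
  by_cases ha : a = 0
  · exact ⟨-b⁻¹, 0, by field_simp [show b ≠ 0 from fun hb => hab ⟨ha, hb⟩]; simp [ha]⟩
  · exact ⟨0, a⁻¹, by field_simp; ring⟩

section ChangeOfCoordinates

variable (a b c u v : K)

/-- The inverse of `(x, y, z) ↦ (a x + b y + c z, u x + v y, z)` when `a v - b u = 1`. -/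
noncomputable def straighten : MvPolynomial (Fin 3) K →ₐ[K] MvPolynomial (Fin 3) K :=
  aeval ![linForm v (-b) (-(v * c)), linForm (-u) a (u * c), X 2]

noncomputable def bend : MvPolynomial (Fin 3) K →ₐ[K] MvPolynomial (Fin 3) K :=
  aeval ![linForm a b 0, linForm u v 0, X 2]

variable {a b u v}

lemma straighten_linForm (huv : a * v - b * u = 1) :
    straighten a b c u v (linForm a b c) = X 0 := by
  have hC : C a * C v - C b * C u = (1 : MvPolynomial (Fin 3) K) := by
    rw [← C_mul, ← C_mul, ← C_sub, huv, C_1]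
  simp only [straighten, linForm, map_add, map_mul, map_neg, aeval_X, aeval_C, algebraMap_eq,
    Matrix.cons_val_zero, Matrix.cons_val_one, Matrix.cons_val]
  linear_combination (X 0 - C c * X 2 : MvPolynomial (Fin 3) K) * hC

lemma bend_killVar_straighten (huv : a * v - b * u = 1) (p : MvPolynomial (Fin 3) K) :
    bend a b u v (killVar 2 (straighten a b c u v p)) = killVar 2 p := by
  have hC : C a * C v - C b * C u = (1 : MvPolynomial (Fin 3) K) := by
    rw [← C_mul, ← C_mul, ← C_sub, huv, C_1]
  suffices (bend a b u v).comp ((killVar 2).comp (straighten a b c u v)) = killVar 2 from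
    DFunLike.congr_fun this p
  refine algHom_ext fun j => ?_
  fin_cases j <;>
    simp only [straighten, bend, linForm, killVar, AlgHom.comp_apply, map_add, map_mul, map_neg,
      map_zero, aeval_X, aeval_C, algebraMap_eq, Matrix.cons_val_zero, Matrix.cons_val_one,
      Matrix.cons_val, Function.update_self, Function.update_of_ne, ne_eq, Fin.reduceEq,
      not_false_eq_true, mul_zero, add_zero, Fin.isValue, Fin.mk_one, Fin.zero_eta, Fin.reduceFinMk]
  · linear_combination (X 0 : MvPolynomial (Fin 3) K) * hC
  · linear_combination (X 1 : MvPolynomial (Fin 3) K) * hC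

lemma totalDegree_straighten_le (p : MvPolynomial (Fin 3) K) :
    (straighten a b c u v p).totalDegree ≤ p.totalDegree := by
  refine totalDegree_aeval_le (fun j => ?_) p
  fin_cases j <;> simp [(isHomogeneous_linForm _ _ _).totalDegree_le, totalDegree_X]

end ChangeOfCoordinates

lemma linForm_dvd_killVar_of_dvd_mul_sub {a b c t : K} (hab : ¬(a = 0 ∧ b = 0)) (ht : t ≠ 0)
    {g : ℕ} {G H : MvPolynomial (Fin 3) K} (hGH : linForm a b c ∣ G * H - C t * X 2 ^ g)
    (hH : H.totalDegree < g) : linForm a b 0 ∣ killVar 2 G := by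
  obtain ⟨u, v, huv⟩ := exists_mul_sub_mul_eq_one hab
  have hdvd : X 0 ∣ straighten a b c u v G * straighten a b c u v H - C t * X 2 ^ g := by
    convert map_dvd (straighten a b c u v) hGH using 1
    · exact (straighten_linForm c huv).symm
    · simp [straighten]
  have hX : X 0 ∣ killVar 2 (straighten a b c u v G) :=
    X_dvd_killVar_of_dvd_mul_sub (by decide) ht hdvd ((totalDegree_straighten_le c H).trans_lt hH)
  have hbend := map_dvd (bend a b u v) hX
  rwa [bend_killVar_straighten c huv, show bend a b u v (X 0) = linForm a b 0 by simp [bend]]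
    at hbend

end LinearForms

section PerturbedProduct

variable {k : Type*} [Field k] {g : ℕ} (a b c : Fin g → k) (t : k)

noncomputable def perturbedProduct : MvPolynomial (Fin 3) k :=
  C t * X 2 ^ g + ∏ j, linForm (a j) (b j) (c j)

lemma eval_linForm_pointAtInfinity (i j : Fin g) (c' : k) :
    eval ![-b i, a i, 0] (linForm (a j) (b j) c') = a i * b j - a j * b i := by
  simp; ring

lemma not_isUnit_perturbedProduct (hg : 1 ≤ g) :
    ¬IsUnit (perturbedProduct a b c t) := by
  let i : Fin g := ⟨0, hg⟩
  intro hu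
  refine (hu.map (eval ![-b i, a i, 0])).ne_zero ?_
  rw [perturbedProduct, map_add, map_prod, Finset.prod_eq_zero (Finset.mem_univ i)
    (by rw [eval_linForm_pointAtInfinity, sub_self])]
  simp [zero_pow (show g ≠ 0 by omega)]

lemma killVar_two_perturbedProduct (hg : 1 ≤ g) :
    killVar 2 (perturbedProduct a b c t) = ∏ j, linForm (a j) (b j) 0 := by
  simp [perturbedProduct, map_prod, zero_pow (show g ≠ 0 by omega)]

lemma totalDegree_perturbedProduct_le :
    (perturbedProduct a b c t).totalDegree ≤ g := by
  rw [perturbedProduct]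
  refine (totalDegree_add _ _).trans (max_le ?_ ?_)
  · refine (totalDegree_mul _ _).trans ?_
    simp [totalDegree_X_pow]
  · refine (totalDegree_finsetProd _ _).trans ?_
    simpa using Finset.sum_le_sum fun j (_ : j ∈ Finset.univ) =>
      (isHomogeneous_linForm (a j) (b j) (c j)).totalDegree_le

variable {a b}

lemma linForm_dvd_killVar_of_mul_eq_perturbedProduct (hg : 1 ≤ g)
    (hinf : ∀ i, ¬(a i = 0 ∧ b i = 0)) (ht : t ≠ 0) {G H : MvPolynomial (Fin 3) k}
    (hGH : G * H = perturbedProduct a b c t) (hG : ¬IsUnit G) (i : Fin g) :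
    linForm (a i) (b i) 0 ∣ killVar 2 G := by
  have hF : G * H ≠ 0 := by
    intro h0
    have := killVar_two_perturbedProduct a b c t hg
    rw [← hGH, h0, map_zero] at this
    exact Finset.prod_ne_zero_iff.mpr (fun j _ => linForm_ne_zero (hinf j) 0) this.symm
  have hG0 : G ≠ 0 := left_ne_zero_of_mul hF
  have hG1 : 1 ≤ G.totalDegree := by
    by_contra! h
    obtain ⟨r, rfl⟩ : ∃ r, G = C r := ⟨_, totalDegree_eq_zero_iff_eq_C.mp (by omega)⟩
    exact hG ((isUnit_iff_ne_zero.mpr fun hr => hG0 (by rw [hr, C_0])).map C)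
  have hH : H.totalDegree < g := by
    have := totalDegree_perturbedProduct_le a b c t
    rw [← hGH, totalDegree_mul_of_isDomain hG0 (right_ne_zero_of_mul hF)] at this
    omega
  refine linForm_dvd_killVar_of_dvd_mul_sub (c := c i) (hinf i) ht ?_ hH
  rw [hGH, perturbedProduct, add_sub_cancel_left]
  exact Finset.dvd_prod_of_mem _ (Finset.mem_univ i)

lemma not_mul_self_dvd_prod_linForm (hinf : ∀ i, ¬(a i = 0 ∧ b i = 0))
    (hdist : ∀ i j, i ≠ j → a i * b j ≠ a j * b i) (i : Fin g) :
    ¬linForm (a i) (b i) 0 * linForm (a i) (b i) 0 ∣ ∏ j, linForm (a j) (b j) 0 := by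
  rw [← Finset.mul_prod_erase _ _ (Finset.mem_univ i),
    mul_dvd_mul_iff_left (linForm_ne_zero (hinf i) 0)]
  rintro ⟨q, hq⟩
  have := congrArg (eval ![-b i, a i, 0]) hq
  rw [map_prod, map_mul, eval_linForm_pointAtInfinity, sub_self, zero_mul,
    Finset.prod_eq_zero_iff] at this
  obtain ⟨j, hj, hij⟩ := this
  simp only [eval_linForm_pointAtInfinity] at hij
  exact hdist i j (Finset.ne_of_mem_erase hj).symm (sub_eq_zero.mp hij)

end PerturbedProduct

theorem stmt13_general (k : Type*) [Field k]
    (g : ℕ) (hg : 1 ≤ g) (a b cc : Fin g → k)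
    (hinf : ∀ i, ¬ (a i = 0 ∧ b i = 0))
    (hdist : ∀ i j, i ≠ j → a i * b j ≠ a j * b i)
    (t : k) (ht : t ≠ 0) :
    Irreducible (C t * (X 2 : MvPolynomial (Fin 3) k) ^ g +
      ∏ i : Fin g, (C (a i) * X 0 + C (b i) * X 1 + C (cc i) * X 2)) := by
  change Irreducible (perturbedProduct a b cc t)
  refine ⟨not_isUnit_perturbedProduct a b cc t hg, fun G H hGH => ?_⟩
  by_contra! hunits
  let i : Fin g := ⟨0, hg⟩
  have hdvd := mul_dvd_mul
    (linForm_dvd_killVar_of_mul_eq_perturbedProduct cc t hg hinf ht hGH.symm hunits.1 i)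
    (linForm_dvd_killVar_of_mul_eq_perturbedProduct cc t hg hinf ht (hGH.trans (mul_comm G H)).symm
      hunits.2 i)
  rw [← map_mul, ← hGH] at hdvd
  exact not_mul_self_dvd_prod_linForm hinf hdist i
    (by rwa [killVar_two_perturbedProduct a b cc t hg] at hdvd)

/-- Let `f₁, …, f_g` be homogeneous linear polynomials in
`x, y, z` over an algebraically closed field `k` of characteristic `0`,
`f i = aᵢ·x + bᵢ·y + cᵢ·z`, such that the projective lines `fᵢ = 0` meet the line
at infinity `z = 0` in `g` pairwise distinct points (i.e. no `fᵢ` is a multiple of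
`z`, and the pairs `(aᵢ, bᵢ)` are pairwise non-proportional).  Then for any nonzero
`t ∈ k`, the polynomial `t·z^g + f₁⋯f_g` is irreducible. -/
theorem stmt13 (k : Type*) [Field k] [IsAlgClosed k] [CharZero k]
    (g : ℕ) (hg : 1 ≤ g) (a b cc : Fin g → k)
    (hinf : ∀ i, ¬ (a i = 0 ∧ b i = 0))
    (hdist : ∀ i j, i ≠ j → a i * b j ≠ a j * b i)
    (t : k) (ht : t ≠ 0) :
    Irreducible (C t * (X 2 : MvPolynomial (Fin 3) k) ^ g +
      ∏ i : Fin g, (C (a i) * X 0 + C (b i) * X 1 + C (cc i) * X 2)) :=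
  stmt13_general k g hg a b cc hinf hdist t ht
end

section
/- Let A be a simple ordinary abelian variety over a finite field 𝔽_q, let π be a root of the characteristic polynomial of its Frobenius endomorphism, and K = ℚ(π). Then the isogeny class of A over 𝔽_q contains exactly one isomorphism class if and only if π is a Weil generator for K (i.e., ℤ[π, π̄] = O_K) and K has class number 1. -/
/-!
The endomorphism rings in the isogeny class are exactly the orders between `ℤ[π, π̄]` and `𝓞 K`.
A single isomorphism class therefore forces `ℤ[π, π̄] = 𝓞 K`; conversely, once the two agree,
every class has endomorphism ring `𝓞 K`, and these classes are counted by the class number.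
-/

open NumberField

theorem Nat.card_eq_one_iff_of_range_eq_Icc {X α : Type*} [PartialOrder α] (f : X → α)
    {lo hi : α} (hrange : Set.range f = Set.Icc lo hi) :
    Nat.card X = 1 ↔ lo = hi ∧ Nat.card {x // f x = hi} = 1 := by
  constructor
  · intro hX
    obtain ⟨hsub, ⟨x⟩⟩ := Nat.card_eq_one_iff_unique.mp hX
    have hle : lo ≤ hi := by
      obtain ⟨h₁, h₂⟩ : f x ∈ Set.Icc lo hi := hrange ▸ Set.mem_range_self x
      exact h₁.trans h₂
    obtain ⟨xlo, hxlo⟩ : lo ∈ Set.range f := hrange ▸ ⟨le_rfl, hle⟩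
    obtain ⟨xhi, hxhi⟩ : hi ∈ Set.range f := hrange ▸ ⟨hle, le_rfl⟩
    refine ⟨by rw [← hxlo, ← hxhi, Subsingleton.elim xlo xhi], ?_⟩
    exact Nat.card_eq_one_iff_unique.mpr ⟨inferInstance, ⟨⟨xhi, hxhi⟩⟩⟩
  · rintro ⟨rfl, hfiber⟩
    have hconst (x : X) : f x = lo := by
      obtain ⟨h₁, h₂⟩ : f x ∈ Set.Icc lo lo := hrange ▸ Set.mem_range_self x
      exact le_antisymm h₂ h₁
    rwa [← Nat.card_congr (Equiv.subtypeUnivEquiv hconst)]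

theorem isWeilGenerator_iff {K : Type*} [Field K] (c : K ≃+* K) {π : K}
    (hint : IsIntegral ℤ π) (hnorm : ∃ n : ℤ, π * c π = n) :
    IsWeilGenerator K c π ↔ Algebra.adjoin ℤ ({π, c π} : Set K) = integralClosure ℤ K :=
  ⟨fun h => h.2.2, fun h => ⟨hint, hnorm, h⟩⟩

theorem stmt16_general (q : ℕ) (K : Type*) [Field K] (c : K ≃+* K)
    (π : K) (hint : IsIntegral ℤ π) (hπq : π * c π = (q : K))
    (Isog : Type*) (EndRing : Isog → Subalgebra ℤ K)
    (hEnd : ∀ O : Subalgebra ℤ K,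
      (Algebra.adjoin ℤ ({π, c π} : Set K) ≤ O ∧ O ≤ integralClosure ℤ K) ↔
        ∃ A : Isog, EndRing A = O)
    (htorsor : Nat.card {A : Isog // EndRing A = integralClosure ℤ K} =
      Nat.card (ClassGroup (𝓞 K))) :
    Nat.card Isog = 1 ↔
      IsWeilGenerator K c π ∧ Nat.card (ClassGroup (𝓞 K)) = 1 := by
  rw [Nat.card_eq_one_iff_of_range_eq_Icc EndRing (Set.ext fun O => (hEnd O).symm), htorsor,
    isWeilGenerator_iff c hint ⟨q, mod_cast hπq⟩]

/-- Let `A` be a simple ordinary abelian variety over `𝔽_q`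
(`q = p^a`), with Frobenius Weil `q`-number `π` generating the CM field `K = ℚ(π)`
(complex conjugation `c`).  The isogeny class of `A` is modelled, following
Honda–Tate and Waterhouse, by the type `Isog` of `𝔽_q`-isomorphism classes in the
isogeny class together with the map `EndRing` recording endomorphism rings:
the endomorphism rings occurring are exactly the orders of `K` containing
`ℤ[π, π̄]`, and the classes with endomorphism ring `𝓞 K` form a principal
homogeneous space under the class group of `K` (so their number is `# Cl(K)`).
Then the isogeny class of `A` contains exactly one isomorphism class if and only if
`π` is a Weil generator for `K` and `K` has class number `1`. -/
theorem stmt16 (p a : ℕ) (hp : p.Prime) (ha : 0 < a) (q : ℕ) (hq : q = p ^ a)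
    (K : Type*) [Field K] [NumberField K]
    (c : K ≃+* K) (hc : ∀ φ : K →+* ℂ, ∀ x : K, φ (c x) = (starRingEnd ℂ) (φ x))
    (π : K) (hint : IsIntegral ℤ π) (hπq : π * c π = (q : K))
    (hgen : IntermediateField.adjoin ℚ ({π} : Set K) = ⊤)
    -- ordinarity: `π + π̄` is coprime to `q` in `𝓞 K`
    (hord : ∃ x y : K, IsIntegral ℤ x ∧ IsIntegral ℤ y ∧
      (π + c π) * x + (q : K) * y = 1)
    (Isog : Type*) (EndRing : Isog → Subalgebra ℤ K)
    (hEnd : ∀ O : Subalgebra ℤ K,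
      (Algebra.adjoin ℤ ({π, c π} : Set K) ≤ O ∧ O ≤ integralClosure ℤ K) ↔
        ∃ A : Isog, EndRing A = O)
    (htorsor : Nat.card {A : Isog // EndRing A = integralClosure ℤ K} =
      Nat.card (ClassGroup (𝓞 K))) :
    Nat.card Isog = 1 ↔
      IsWeilGenerator K c π ∧ Nat.card (ClassGroup (𝓞 K)) = 1 :=
  stmt16_general q K c π hint hπq Isog EndRing hEnd htorsor
end

section
/- Let K be a CM field of degree 2g (g ≥ 2) with maximal totally real subfield F, and fix γ ∈ O_K with O_K = O_F[γ]. If α is a Weil generator for K, then α = (u(γ - γ̄) + η + a)/2 for a unique triple (u, η, a), where u ∈ O_F^×, a ∈ ℤ, and η ranges over a fixed set T of representatives (up to integer translation) of elements generating O_F over ℤ. Moreover u = (α - ᾱ)/(γ - γ̄). -/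
open NumberField

/-!
The fixed field of `c` is `F`, so `β = α + ᾱ` lies in `𝓞 F` and `α` is a root of
`X² - βX + αᾱ` with `αᾱ ∈ ℤ`. Hence `𝓞 K = ℤ[α, ᾱ] = ℤ[β] + ℤ[β]α`; as `1, α` are independent
over `F`, this forces `𝓞 F = ℤ[β]`, and writing `α = s + tγ` and `γ = s' + t'α` over `𝓞 F`
gives `tt' = 1`. Now `2α = t(γ - γ̄) + β` with `β = η + m`, `η ∈ T`. Conversely, applying `c` to
`2α = u(γ - γ̄) + η + a` gives `α - ᾱ = u(γ - γ̄)` and `α + ᾱ = η + a`, which determine `u`, then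
`η` and `a`.
-/

section
variable {R S : Type*} [CommRing R] [CommRing S] [Algebra R S]
open Polynomial

theorem exists_eq_aeval_add_aeval_mul_of_mem_adjoin {x y : S} {n : R}
    (hx : x * x = y * x - algebraMap R S n) {z : S} (hz : z ∈ Algebra.adjoin R {y, x}) :
    ∃ f g : R[X], z = aeval y f + aeval y g * x := by
  let A : Subalgebra R S :=
    { carrier := {z | ∃ f g : R[X], z = aeval y f + aeval y g * x}
      add_mem' := by
        rintro _ _ ⟨f₁, g₁, rfl⟩ ⟨f₂, g₂, rfl⟩
        exact ⟨f₁ + f₂, g₁ + g₂, by simp only [map_add]; ring⟩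
      mul_mem' := by
        rintro _ _ ⟨f₁, g₁, rfl⟩ ⟨f₂, g₂, rfl⟩
        refine ⟨f₁ * f₂ - C n * (g₁ * g₂), f₁ * g₂ + f₂ * g₁ + X * (g₁ * g₂), ?_⟩
        simp only [map_add, map_mul, map_sub, aeval_C, aeval_X]
        linear_combination aeval y g₁ * aeval y g₂ * hx
      algebraMap_mem' := fun r => ⟨C r, 0, by simp⟩ }
  refine Algebra.adjoin_le (S := A) ?_ hz
  rintro _ (rfl | rfl)
  · exact ⟨X, 0, by simp⟩
  · exact ⟨0, 1, by simp⟩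

theorem exists_eq_algebraMap_add_algebraMap_mul {x : S} {p q : R}
    (hx : x * x = algebraMap R S p * x - algebraMap R S q) (hx' : Algebra.adjoin R {x} = ⊤)
    (z : S) : ∃ s t : R, z = algebraMap R S s + algebraMap R S t * x := by
  have hz : z ∈ Algebra.adjoin R {algebraMap R S p, x} :=
    Algebra.adjoin_mono (Set.subset_insert _ _) (hx' ▸ Algebra.mem_top)
  obtain ⟨f, g, rfl⟩ := exists_eq_aeval_add_aeval_mul_of_mem_adjoin hx hz
  exact ⟨f.eval p, g.eval p, by simp only [aeval_algebraMap_apply_eq_algebraMap_eval]⟩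

end

section
variable {R F K : Type*} [CommRing R] [Field F] [Field K] [Algebra R F] [Algebra R K]
  [Algebra F K] [IsScalarTower R F K]

theorem eq_and_eq_of_algebraMap_add_mul_eq (hR : Function.Injective (algebraMap R F)) {w : K}
    (hw : w ∉ Set.range (algebraMap F K)) {a b a' b' : R}
    (h : algebraMap R K a + algebraMap R K b * w = algebraMap R K a' + algebraMap R K b' * w) :
    a = a' ∧ b = b' := by
  have hinj : Function.Injective (algebraMap R K) := by
    rw [IsScalarTower.algebraMap_eq R F K]
    exact (algebraMap F K).injective.comp hR
  by_cases hb : b = b'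
  · subst hb
    exact ⟨hinj (add_right_cancel h), rfl⟩
  · refine absurd ⟨(algebraMap R F (a' - a)) / (algebraMap R F (b - b')), ?_⟩ hw
    have hb' : algebraMap R K (b - b') ≠ 0 := (map_ne_zero_iff _ hinj).mpr (sub_ne_zero.mpr hb)
    rw [map_div₀, ← IsScalarTower.algebraMap_apply, ← IsScalarTower.algebraMap_apply,
      div_eq_iff hb', map_sub, map_sub]
    linear_combination -h

theorem isUnit_of_eq_algebraMap_add_mul (hR : Function.Injective (algebraMap R F)) {v w : K}
    (hw : w ∉ Set.range (algebraMap F K)) {s t a b : R}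
    (hwv : w = algebraMap R K s + algebraMap R K t * v)
    (hvw : v = algebraMap R K a + algebraMap R K b * w) : IsUnit t := by
  have h : algebraMap R K 0 + algebraMap R K 1 * w
      = algebraMap R K (s + t * a) + algebraMap R K (t * b) * w := by
    rw [map_zero, map_one, zero_add, one_mul, map_add, map_mul, map_mul]
    linear_combination hwv + algebraMap R K t * hvw
  exact .of_mul_eq_one _ (eq_and_eq_of_algebraMap_add_mul_eq hR hw h).2.symm

end

theorem mem_range_algebraMap_of_apply_eq {F K G : Type*} [Field F] [Field K] [Algebra F K]
    [FunLike G K K] [AlgHomClass G F K K] (h2 : Module.finrank F K = 2) {c : G}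
    (hc : ∃ x, c x ≠ x) {z : K} (hz : c z = z) : z ∈ Set.range (algebraMap F K) := by
  have := Subalgebra.isSimpleOrder_of_finrank_prime F K (h2 ▸ Nat.prime_two)
  rcases eq_bot_or_eq_top (AlgHom.equalizer (AlgHomClass.toAlgHom c) (AlgHom.id F K)) with h | h
  · exact Algebra.mem_bot.mp (h ▸ hz)
  · obtain ⟨x, hx⟩ := hc
    exact absurd ((AlgHom.mem_equalizer _ _ _).mp (h ▸ Algebra.mem_top : x ∈ _)) hx

theorem eq_add_div_two_iff {K G : Type*} [Field K] [CharZero K] [FunLike G K K]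
    [RingHomClass G K K] {c : G} (hcc : Function.Involutive c) {α x δ w : K} (hx : c x = x)
    (hw : c w = w) : α = (x * (δ - c δ) + w) / 2 ↔ α - c α = x * (δ - c δ) ∧ α + c α = w := by
  constructor
  · intro h
    have hc : c α = (x * (c δ - δ) + w) / 2 := by
      rw [h, map_div₀, map_add, map_mul, map_sub, hcc δ, hx, hw, map_ofNat]
    exact ⟨by linear_combination h - hc, by linear_combination h + hc⟩
  · rintro ⟨h₁, h₂⟩
    linear_combination (h₁ + h₂) / 2

theorem involutive_of_map_apply_eq_conj {K : Type*} [Field K] (φ : K →+* ℂ) {c : K → K}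
    (hc : ∀ x, φ (c x) = starRingEnd ℂ (φ x)) : Function.Involutive c :=
  fun x => φ.injective (by rw [hc, hc, Complex.conj_conj])

theorem TotallyImaginary.exists_apply_ne {K : Type*} [Field K] (hK : TotallyImaginary K)
    (φ : K →+* ℂ) {c : K → K} (hc : ∀ x, φ (c x) = starRingEnd ℂ (φ x)) : ∃ x, c x ≠ x := by
  obtain ⟨x, hx⟩ := hK φ
  exact ⟨x, fun h => hx (by rw [← hc, h])⟩

section
variable {F K : Type*} [Field F] [Field K] [Algebra F K]
open Polynomial

theorem exists_algebraMap_eq_of_isIntegral {z : K} (hz : IsIntegral ℤ z)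
    (hzF : z ∈ Set.range (algebraMap F K)) : ∃ b : 𝓞 F, algebraMap (𝓞 F) K b = z := by
  obtain ⟨w, rfl⟩ := hzF
  exact ⟨⟨w, (isIntegral_algebraMap_iff (algebraMap F K).injective).mp hz⟩,
    IsScalarTower.algebraMap_apply (𝓞 F) F K _⟩

theorem exists_eq_algebraMap_add_mul_of_adjoin_eq_top {G : Type*} [FunLike G K K]
    [AlgHomClass G F K K] {c : G} (hcc : Function.Involutive c)
    (hfix : ∀ z, c z = z → z ∈ Set.range (algebraMap F K)) {γ : 𝓞 K}
    (hγ : Algebra.adjoin (𝓞 F) {γ} = ⊤) {z : K} (hz : IsIntegral ℤ z) :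
    ∃ s t : 𝓞 F, z = algebraMap (𝓞 F) K s + algebraMap (𝓞 F) K t * algebraMap (𝓞 K) K γ := by
  have hγK : IsIntegral ℤ (algebraMap (𝓞 K) K γ) := γ.isIntegral_coe
  have hcγK : IsIntegral ℤ (c (algebraMap (𝓞 K) K γ)) :=
    hγK.map ((AlgHomClass.toAlgHom c).restrictScalars ℤ)
  obtain ⟨p, hp⟩ := exists_algebraMap_eq_of_isIntegral (hγK.add hcγK)
    (hfix _ (by rw [map_add, hcc, add_comm]))
  obtain ⟨q, hq⟩ := exists_algebraMap_eq_of_isIntegral (hγK.mul hcγK)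
    (hfix _ (by rw [map_mul, hcc, mul_comm]))
  have hrel : γ * γ = algebraMap (𝓞 F) (𝓞 K) p * γ - algebraMap (𝓞 F) (𝓞 K) q := by
    apply FaithfulSMul.algebraMap_injective (𝓞 K) K
    simp only [map_mul, map_sub, ← IsScalarTower.algebraMap_apply, hp, hq]
    ring
  obtain ⟨s, t, hst⟩ := exists_eq_algebraMap_add_algebraMap_mul hrel hγ ⟨z, hz⟩
  refine ⟨s, t, ?_⟩
  have h := congrArg (algebraMap (𝓞 K) K) hst
  simp only [map_add, map_mul, ← IsScalarTower.algebraMap_apply] at h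
  exact h

theorem IsWeilGenerator.apply_ne_self [NumberField K] {σ : K ≃+* K} {α : K}
    (hW : IsWeilGenerator K σ α) (hσ : ∃ x, σ x ≠ x) : σ α ≠ α := by
  intro hα
  have hle : integralClosure ℤ K ≤ AlgHom.equalizer σ.toRingHom.toIntAlgHom (AlgHom.id ℤ K) := by
    rw [← hW.2.2]
    refine Algebra.adjoin_le ?_
    rintro _ (rfl | rfl)
    · exact hα
    · exact congrArg σ hα
  have hid : (σ : K →+* K) = RingHom.id K :=
    IsLocalization.ringHom_ext (nonZeroDivisors (𝓞 K)) (RingHom.ext fun x => hle x.isIntegral_coe)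
  obtain ⟨x, hx⟩ := hσ
  exact hx (RingHom.congr_fun hid x)

theorem IsWeilGenerator.exists_eq_add_mul {σ : K ≃+* K} {α : K} (hW : IsWeilGenerator K σ α)
    {β : 𝓞 F} (hβ : algebraMap (𝓞 F) K β = α + σ α) {z : K} (hz : IsIntegral ℤ z) :
    ∃ a ∈ Algebra.adjoin ℤ {β}, ∃ b ∈ Algebra.adjoin ℤ {β},
      z = algebraMap (𝓞 F) K a + algebraMap (𝓞 F) K b * α := by
  obtain ⟨n, hn⟩ := hW.2.1
  have hrel : α * α = algebraMap (𝓞 F) K β * α - algebraMap ℤ K n := by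
    rw [hβ, eq_intCast]
    linear_combination -hn
  have hz' : z ∈ Algebra.adjoin ℤ {algebraMap (𝓞 F) K β, α} := by
    refine Algebra.adjoin_le ?_ (hW.2.2 ▸ hz : z ∈ Algebra.adjoin ℤ {α, σ α})
    rintro _ (rfl | rfl)
    · exact Algebra.subset_adjoin (by simp)
    · rw [eq_sub_of_add_eq' hβ.symm]
      exact sub_mem (Algebra.subset_adjoin (by simp)) (Algebra.subset_adjoin (by simp))
  obtain ⟨f, g, rfl⟩ := exists_eq_aeval_add_aeval_mul_of_mem_adjoin hrel hz'
  exact ⟨_, aeval_mem_adjoin_singleton ℤ (p := f) β, _, aeval_mem_adjoin_singleton ℤ (p := g) β,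
    by simp only [aeval_algebraMap_apply]⟩

theorem IsWeilGenerator.adjoin_eq_top {σ : K ≃+* K} {α : K} (hW : IsWeilGenerator K σ α)
    {β : 𝓞 F} (hβ : algebraMap (𝓞 F) K β = α + σ α) (hα : α ∉ Set.range (algebraMap F K)) :
    Algebra.adjoin ℤ {β} = ⊤ := by
  refine eq_top_iff.mpr fun y _ => ?_
  obtain ⟨a, ha, b, -, hab⟩ := hW.exists_eq_add_mul hβ (y.isIntegral.algebraMap (B := K))
  have h : algebraMap (𝓞 F) K y + algebraMap (𝓞 F) K 0 * α
      = algebraMap (𝓞 F) K a + algebraMap (𝓞 F) K b * α := by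
    rwa [map_zero, zero_mul, add_zero]
  exact (eq_and_eq_of_algebraMap_add_mul_eq (FaithfulSMul.algebraMap_injective (𝓞 F) F) hα h).1 ▸ ha

end

theorem IsWeilGenerator.exists_unit_and_trace {F K : Type*} [Field F] [Field K] [NumberField K]
    [Algebra F K] (h2 : Module.finrank F K = 2) {c : K ≃ₐ[F] K} (hcc : Function.Involutive c)
    (hne : ∃ x, c x ≠ x) {γ : 𝓞 K} (hγ : Algebra.adjoin (𝓞 F) {γ} = ⊤) {α : K}
    (hW : IsWeilGenerator K c.toRingEquiv α) :
    ∃ t : (𝓞 F)ˣ, ∃ β : 𝓞 F,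
      α - c α = algebraMap (𝓞 F) K t * (algebraMap (𝓞 K) K γ - c (algebraMap (𝓞 K) K γ)) ∧
      algebraMap (𝓞 F) K β = α + c α ∧ Algebra.adjoin ℤ {β} = ⊤ := by
  have hfix : ∀ z, c z = z → z ∈ Set.range (algebraMap F K) :=
    fun _ => mem_range_algebraMap_of_apply_eq h2 hne
  have hα : α ∉ Set.range (algebraMap F K) :=
    fun ⟨w, hw⟩ => hW.apply_ne_self hne (hw ▸ c.commutes w)
  have hcαint : IsIntegral ℤ (c α) := hW.1.map ((c : K →ₐ[F] K).restrictScalars ℤ)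
  obtain ⟨β, hβ⟩ := exists_algebraMap_eq_of_isIntegral (hW.1.add hcαint)
    (hfix _ (by rw [map_add, hcc, add_comm]))
  obtain ⟨s, t, hst⟩ := exists_eq_algebraMap_add_mul_of_adjoin_eq_top hcc hfix hγ hW.1
  obtain ⟨a, -, b, -, hab⟩ := hW.exists_eq_add_mul hβ γ.isIntegral_coe
  have ht : IsUnit t :=
    isUnit_of_eq_algebraMap_add_mul (FaithfulSMul.algebraMap_injective (𝓞 F) F) hα hst hab
  refine ⟨ht.unit, β, ?_, hβ, hW.adjoin_eq_top hβ hα⟩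
  have hcF : ∀ y : 𝓞 F, c (algebraMap (𝓞 F) K y) = algebraMap (𝓞 F) K y := fun y => by
    rw [IsScalarTower.algebraMap_apply (𝓞 F) F K, c.commutes]
  rw [IsUnit.unit_spec, hst, map_add, map_mul, hcF, hcF]
  ring

theorem stmt17_general
    (F K : Type*) [Field F] [Field K] [NumberField F] [NumberField K] [Algebra F K]
    (hK : TotallyImaginary K)
    (h2 : Module.finrank F K = 2)
    (c : K ≃ₐ[F] K)
    (hc : ∀ φ : K →+* ℂ, ∀ x : K, φ (c x) = (starRingEnd ℂ) (φ x))
    (γ : 𝓞 K) (hγ : Algebra.adjoin (𝓞 F) ({γ} : Set (𝓞 K)) = ⊤)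
    (T : Set (𝓞 F))
    (hT2 : ∀ η' : 𝓞 F, Algebra.adjoin ℤ ({η'} : Set (𝓞 F)) = ⊤ →
      ∃! η : 𝓞 F, η ∈ T ∧ ∃ m : ℤ, η' - η = (m : 𝓞 F))
    (α : K) (hW : IsWeilGenerator K c.toRingEquiv α) :
    (∃! x : (𝓞 F)ˣ × 𝓞 F × ℤ, x.2.1 ∈ T ∧
      α = (algebraMap F K (algebraMap (𝓞 F) F (x.1 : 𝓞 F)) *
            (algebraMap (𝓞 K) K γ - c (algebraMap (𝓞 K) K γ)) +
          algebraMap F K (algebraMap (𝓞 F) F x.2.1) + (x.2.2 : K)) / 2) ∧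
    ∀ (u : (𝓞 F)ˣ) (η : 𝓞 F) (a : ℤ), η ∈ T →
      α = (algebraMap F K (algebraMap (𝓞 F) F (u : 𝓞 F)) *
            (algebraMap (𝓞 K) K γ - c (algebraMap (𝓞 K) K γ)) +
          algebraMap F K (algebraMap (𝓞 F) F η) + (a : K)) / 2 →
      algebraMap F K (algebraMap (𝓞 F) F (u : 𝓞 F)) =
        (α - c α) / (algebraMap (𝓞 K) K γ - c (algebraMap (𝓞 K) K γ)) := by
  obtain ⟨φ⟩ : Nonempty (K →+* ℂ) := inferInstance
  have hcc : Function.Involutive c := involutive_of_map_apply_eq_conj φ (hc φ)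
  have hne : ∃ x, c x ≠ x := hK.exists_apply_ne φ (hc φ)
  obtain ⟨t, β, hsub, hβ, hβgen⟩ := hW.exists_unit_and_trace h2 hcc hne hγ
  obtain ⟨η, ⟨hηT, m, hm⟩, hη⟩ := hT2 β hβgen
  simp only [add_assoc]
  simp only [eq_add_div_two_iff hcc, AlgEquiv.commutes, map_add, map_intCast]
  simp only [← IsScalarTower.algebraMap_apply, hsub, ← hβ]
  set δ := algebraMap (𝓞 K) K γ - c (algebraMap (𝓞 K) K γ)
  have hδ : δ ≠ 0 := fun h =>
    hW.apply_ne_self hne (sub_eq_zero.mp (show α - c α = 0 by rw [hsub, h, mul_zero])).symm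
  have hinj := FaithfulSMul.algebraMap_injective (𝓞 F) K
  have hrepr : ∀ (u η : 𝓞 F) (a : ℤ), (algebraMap (𝓞 F) K t * δ = algebraMap (𝓞 F) K u * δ ∧
      algebraMap (𝓞 F) K β = algebraMap (𝓞 F) K η + a) ↔ u = t ∧ β - η = a := by
    intro u η a
    rw [mul_left_inj' hδ, hinj.eq_iff, ← map_intCast (algebraMap (𝓞 F) K), ← map_add,
      hinj.eq_iff, eq_comm (a := (t : 𝓞 F)), sub_eq_iff_eq_add']
  simp only [hrepr]
  refine ⟨⟨(t, η, m), ⟨hηT, rfl, hm⟩, ?_⟩, fun u _ _ _ h => by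
    rw [h.1, mul_div_cancel_right₀ _ hδ]⟩
  rintro ⟨u, η', a'⟩ ⟨hη'T, hu, ha⟩
  obtain rfl := hη η' ⟨hη'T, a', ha⟩
  exact Prod.ext (Units.ext hu) (Prod.ext rfl (Int.cast_injective (ha.symm.trans hm)))

/-- Let `K` be a CM field of degree `2g` (`g ≥ 2`) with maximal
totally real subfield `F`, complex conjugation `c`, and fix `γ ∈ 𝓞 K` with
`𝓞 K = 𝓞 F[γ]` and a set `T` of representatives, up to integer translation, of the
generators of `𝓞 F` over `ℤ`.  If `α` is a Weil generator for `K`, then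
`α = (u(γ - γ̄) + η + a)/2` for a unique triple `(u, η, a)` with `u ∈ 𝓞 F ˣ`,
`η ∈ T`, `a ∈ ℤ`; moreover `u = (α - ᾱ)/(γ - γ̄)`. -/
theorem stmt17 (g : ℕ) (hg : 2 ≤ g)
    (F K : Type*) [Field F] [Field K] [NumberField F] [NumberField K] [Algebra F K]
    (hF : TotallyReal F) (hK : TotallyImaginary K)
    (hgF : Module.finrank ℚ F = g) (h2 : Module.finrank F K = 2)
    (c : K ≃ₐ[F] K)
    (hc : ∀ φ : K →+* ℂ, ∀ x : K, φ (c x) = (starRingEnd ℂ) (φ x))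
    (γ : 𝓞 K) (hγ : Algebra.adjoin (𝓞 F) ({γ} : Set (𝓞 K)) = ⊤)
    (T : Set (𝓞 F))
    (hT1 : ∀ η ∈ T, Algebra.adjoin ℤ ({η} : Set (𝓞 F)) = ⊤)
    (hT2 : ∀ η' : 𝓞 F, Algebra.adjoin ℤ ({η'} : Set (𝓞 F)) = ⊤ →
      ∃! η : 𝓞 F, η ∈ T ∧ ∃ m : ℤ, η' - η = (m : 𝓞 F))
    (α : K) (hW : IsWeilGenerator K c.toRingEquiv α) :
    (∃! x : (𝓞 F)ˣ × 𝓞 F × ℤ, x.2.1 ∈ T ∧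
      α = (algebraMap F K (algebraMap (𝓞 F) F (x.1 : 𝓞 F)) *
            (algebraMap (𝓞 K) K γ - c (algebraMap (𝓞 K) K γ)) +
          algebraMap F K (algebraMap (𝓞 F) F x.2.1) + (x.2.2 : K)) / 2) ∧
    ∀ (u : (𝓞 F)ˣ) (η : 𝓞 F) (a : ℤ), η ∈ T →
      α = (algebraMap F K (algebraMap (𝓞 F) F (u : 𝓞 F)) *
            (algebraMap (𝓞 K) K γ - c (algebraMap (𝓞 K) K γ)) +
          algebraMap F K (algebraMap (𝓞 F) F η) + (a : K)) / 2 →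
      algebraMap F K (algebraMap (𝓞 F) F (u : 𝓞 F)) =
        (α - c α) / (algebraMap (𝓞 K) K γ - c (algebraMap (𝓞 K) K γ)) :=
  stmt17_general F K hK h2 c hc γ hγ T hT2 α hW
end

section
/- Let K be a CM field of degree 2g with g ≥ 3, maximal totally real subfield F, γ ∈ O_K with O_K = O_F[γ], and δ = (γ - γ̄)(γ̄ - γ) ∈ O_F. If α is a Weil generator for K written as α = (u(γ - γ̄) + η + a)/2 with u ∈ O_F^×, ℤ[η] = O_F, a ∈ ℤ, then there exist integers A, B ∈ ℤ with u²δ + η² = A + Bη, and consequently N_{F/ℚ}(A + Bη - η²) = ±Disc_K / Disc_F², so (A, B) is an integral point on the affine plane curve ∏_{σ: F→ℝ}(x + yσ(η) - σ(η)²) = |Disc_K|/Disc_F². -/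
open NumberField

/-! Write `θ = γ - γ̄`. Expanding `4αᾱ = 4n` gives `u²δ + η² = (4n - a²) - 2aη`, so
`A + Bη - η² = u²δ`, whose norm is `N(δ)` as `u` is a unit. Since `𝓞_K = 𝓞_F[γ]`, the relative
different is generated by `f'(γ) = θ`, `f` the minimal polynomial of `γ` over `𝓞_F`; hence
`|Disc K| = |N_{K/ℚ}(θ)| · Disc F² = |N_{F/ℚ}(δ)| · Disc F²`. Finally `N_{F/ℚ}(δ) ≥ 0`: for any
embedding `φ` of `K` extending `σ : F → ℂ`, `σ(δ) = φ(θ) · conj φ(θ) = |φ(θ)|²`. -/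

open Polynomial

theorem Polynomial.eval_derivative_eq_sub_of_natDegree_eq_two {R : Type*} [CommRing R] [IsDomain R]
    {p : R[X]} (hp : p.Monic) (hdeg : p.natDegree = 2) {a b : R} (ha : p.IsRoot a)
    (hb : p.IsRoot b) (hab : a ≠ b) : p.derivative.eval a = a - b := by
  have hp_eq : p = X ^ 2 + C (p.coeff 1) * X + C (p.coeff 0) := by
    have hlead : p.coeff 2 = 1 := hdeg ▸ hp.coeff_natDegree
    conv_lhs => rw [p.as_sum_range_C_mul_X_pow, hdeg]
    simp only [Finset.sum_range_succ, Finset.sum_range_zero, hlead, map_one, pow_zero, pow_one]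
    ring
  rw [hp_eq] at ha hb ⊢
  simp only [IsRoot, eval_add, eval_mul, eval_pow, eval_C, eval_X] at ha hb
  have hsum : a + b + p.coeff 1 = 0 :=
    (mul_eq_zero.mp (by linear_combination ha - hb : (a - b) * (a + b + p.coeff 1) = 0)
      ).resolve_left (sub_ne_zero.mpr hab)
  simp only [derivative_X_pow_succ, Nat.cast_one, map_add, map_one, pow_one,
    derivative_mul, derivative_C, zero_mul, derivative_X, mul_one, zero_add, add_zero, eval_add,
    eval_mul, eval_one, eval_X, eval_C]
  linear_combination hsum

section Quadratic

variable {F K : Type*} [Field F] [Field K] [Algebra F K]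

theorem AlgEquiv.apply_ne_self_of_adjoin_eq_top {x : K} (hx : Algebra.adjoin F {x} = ⊤)
    {σ : K ≃ₐ[F] K} (hσ : σ ≠ 1) : σ x ≠ x := fun h ↦
  hσ <| AlgEquiv.coe_toAlgHom_injective <| AlgHom.ext_of_adjoin_eq_top hx <| by
    rintro _ rfl; exact h

theorem Algebra.algebraMap_norm_eq_mul_of_finrank_eq_two [FiniteDimensional F K] [IsGalois F K]
    (h2 : Module.finrank F K = 2) {σ : K ≃ₐ[F] K} (hσ : σ ≠ 1) (x : K) :
    algebraMap F K (Algebra.norm F x) = x * σ x := by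
  classical
  have huniv : ({1, σ} : Finset (K ≃ₐ[F] K)) = Finset.univ :=
    Finset.eq_of_subset_of_card_le (Finset.subset_univ _) <| by
      rw [Finset.card_univ, ← Nat.card_eq_fintype_card, IsGalois.card_aut_eq_finrank, h2,
        Finset.card_pair hσ.symm]
  rw [Algebra.norm_eq_prod_automorphisms, ← huniv, Finset.prod_pair hσ.symm]
  rfl

theorem aeval_derivative_minpoly_eq_sub_of_finrank_eq_two [FiniteDimensional F K]
    (h2 : Module.finrank F K = 2) {x : K} (hx : Algebra.adjoin F {x} = ⊤)
    {σ : K ≃ₐ[F] K} (hσ : σ ≠ 1) :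
    aeval x (derivative (minpoly F x)) = x - σ x := by
  have hint : IsIntegral F x := .of_finite F x
  have hdeg : (minpoly F x).natDegree = 2 := by
    rw [← h2, ← Field.primitive_element_iff_minpoly_natDegree_eq,
      ← IntermediateField.toSubalgebra_inj,
      IntermediateField.adjoin_simple_toSubalgebra_of_isAlgebraic hint.isAlgebraic, hx,
      IntermediateField.top_toSubalgebra]
  rw [← eval_map_algebraMap, ← derivative_map]
  refine eval_derivative_eq_sub_of_natDegree_eq_two ((minpoly.monic hint).map _)
    (by rwa [natDegree_map]) ?_ ?_ (AlgEquiv.apply_ne_self_of_adjoin_eq_top hx hσ).symm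
  · rw [IsRoot, eval_map_algebraMap, minpoly.aeval]
  · rw [IsRoot, eval_map_algebraMap, aeval_algEquiv, AlgHom.comp_apply, minpoly.aeval, map_zero]

theorem sq_mul_add_sq_eq_of_mul_conj_eq_intCast [CharZero K] {c : K ≃ₐ[F] K}
    (hc : ∀ x, c (c x) = x) {u η δ : F} {γ α : K} {a n : ℤ}
    (hδ : algebraMap F K δ = (γ - c γ) * (c γ - γ)) (hn : α * c α = n)
    (hα : α = (algebraMap F K u * (γ - c γ) + algebraMap F K η + a) / 2) :
    u ^ 2 * δ + η ^ 2 = ((4 * n - a ^ 2 : ℤ) : F) + ((-(2 * a) : ℤ) : F) * η := by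
  have hcα : c α = (algebraMap F K u * (c γ - γ) + algebraMap F K η + a) / 2 := by
    rw [hα, map_div₀, map_add, map_add, map_mul, map_sub, hc, AlgEquiv.commutes, AlgEquiv.commutes,
      map_intCast, map_ofNat]
  apply (algebraMap F K).injective
  rw [hcα, hα] at hn
  simp only [map_add, map_mul, map_pow, map_intCast, hδ]
  push_cast
  linear_combination 4 * hn

end Quadratic

def IsComplexConj {F K : Type*} [Field F] [Field K] [Algebra F K] (c : K ≃ₐ[F] K) : Prop :=
  ∀ φ : K →+* ℂ, ∀ x : K, φ (c x) = (starRingEnd ℂ) (φ x)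

namespace IsComplexConj

variable {F K : Type*} [Field F] [Field K] [NumberField K] [Algebra F K] {c : K ≃ₐ[F] K}

theorem apply_apply (hc : IsComplexConj c) (x : K) : c (c x) = x := by
  obtain ⟨φ⟩ := (inferInstance : Nonempty (K →+* ℂ))
  exact φ.injective (by rw [hc, hc, Complex.conj_conj])

theorem ne_one (hc : IsComplexConj c) (hK : TotallyImaginary K) : c ≠ 1 := by
  rintro rfl
  obtain ⟨φ⟩ := (inferInstance : Nonempty (K →+* ℂ))
  obtain ⟨x, hx⟩ := hK φ
  exact hx (hc φ x).symm

theorem norm_nonneg_of_algebraMap_eq_mul [NumberField F] (hc : IsComplexConj c) {δ : F} {θ : K}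
    (h : algebraMap F K δ = θ * c θ) : 0 ≤ Algebra.norm ℚ δ := by
  have hσ : ∀ σ : F →ₐ[ℚ] ℂ,
      σ δ = (Complex.normSq (ComplexEmbedding.lift K (σ : F →+* ℂ) θ) : ℂ) := by
    intro σ
    rw [← Complex.mul_conj, ← hc, ← map_mul, ← h, ComplexEmbedding.lift_algebraMap_apply]
    rfl
  have hprod : ((Algebra.norm ℚ δ : ℝ) : ℂ) =
      ((∏ σ : F →ₐ[ℚ] ℂ, Complex.normSq (ComplexEmbedding.lift K (σ : F →+* ℂ) θ) : ℝ) : ℂ) := by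
    rw [Complex.ofReal_prod, ← Finset.prod_congr rfl (fun σ _ ↦ hσ σ),
      ← Algebra.norm_eq_prod_embeddings ℚ ℂ]
    simp
  exact_mod_cast (Complex.ofReal_inj.mp hprod) ▸
    Finset.prod_nonneg fun σ _ ↦ Complex.normSq_nonneg _

end IsComplexConj

section RelativelyMonogenic

open IntermediateField

variable {F K : Type*} [Field F] [Field K] [NumberField F] [NumberField K] [Algebra F K]

theorem NumberField.adjoin_algebraMap_eq_top_of_adjoin_eq_top {γ : 𝓞 K}
    (hγ : Algebra.adjoin (𝓞 F) {γ} = ⊤) : Algebra.adjoin F {algebraMap (𝓞 K) K γ} = ⊤ := by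
  set x := algebraMap (𝓞 K) K γ
  have hint : IsIntegral F x := .of_finite F x
  rw [← IntermediateField.adjoin_simple_toSubalgebra_of_isAlgebraic hint.isAlgebraic,
    ← IntermediateField.top_toSubalgebra, IntermediateField.toSubalgebra_inj, eq_top_iff]
  have hO : ∀ y : 𝓞 K, algebraMap (𝓞 K) K y ∈ F⟮x⟯ := by
    intro y
    have hy : algebraMap (𝓞 K) K y ∈ (Algebra.adjoin (𝓞 F) {γ}).map
        (IsScalarTower.toAlgHom (𝓞 F) (𝓞 K) K) := ⟨y, hγ ▸ Algebra.mem_top, rfl⟩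
    rw [AlgHom.map_adjoin_singleton] at hy
    refine Algebra.adjoin_le (S := F⟮x⟯.toSubalgebra.restrictScalars (𝓞 F)) ?_ hy
    exact Set.singleton_subset_iff.mpr (mem_adjoin_simple_self F x)
  rintro z -
  obtain ⟨p, q, -, rfl⟩ := IsFractionRing.div_surjective (A := 𝓞 K) z
  exact div_mem (hO p) (hO q)

theorem NumberField.natAbs_discr_eq_of_adjoin_eq_top {γ : 𝓞 K}
    (hγ : Algebra.adjoin (𝓞 F) {γ} = ⊤) :
    (discr K).natAbs = (Algebra.norm ℤ (aeval γ (derivative (minpoly (𝓞 F) γ)))).natAbs *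
      (discr F).natAbs ^ Module.finrank F K := by
  rw [natAbs_discr_eq_absNorm_differentIdeal_mul_natAbs_discr_pow F (𝓞 F) K (𝓞 K),
    ← Ideal.absNorm_span_singleton,
    ← conductor_mul_differentIdeal (𝓞 F) F K γ (adjoin_algebraMap_eq_top_of_adjoin_eq_top hγ),
    conductor_eq_top_of_adjoin_eq_top hγ, Ideal.top_mul]

theorem NumberField.abs_discr_eq_abs_norm_mul_discr_sq (h2 : Module.finrank F K = 2)
    {c : K ≃ₐ[F] K} (hc : c ≠ 1) {γ : 𝓞 K} (hγ : Algebra.adjoin (𝓞 F) {γ} = ⊤) {δ : F}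
    (hδ : algebraMap F K δ = (algebraMap (𝓞 K) K γ - c (algebraMap (𝓞 K) K γ)) *
      c (algebraMap (𝓞 K) K γ - c (algebraMap (𝓞 K) K γ))) :
    |(discr K : ℚ)| = |Algebra.norm ℚ δ| * (discr F : ℚ) ^ 2 := by
  have : Algebra.IsQuadraticExtension F K := ⟨h2⟩
  set x := algebraMap (𝓞 K) K γ
  have hdiff : algebraMap (𝓞 K) K (aeval γ (derivative (minpoly (𝓞 F) γ))) = x - c x := by
    rw [← aeval_derivative_minpoly_eq_sub_of_finrank_eq_two h2
        (adjoin_algebraMap_eq_top_of_adjoin_eq_top hγ) hc,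
      minpoly.isIntegrallyClosed_eq_field_fractions F K
        (Algebra.IsIntegral.isIntegral (R := 𝓞 F) γ),
      derivative_map, aeval_map_algebraMap, aeval_algebraMap_apply]
  have hnorm : Algebra.norm F (x - c x) = δ := (algebraMap F K).injective <| by
    rw [Algebra.algebraMap_norm_eq_mul_of_finrank_eq_two h2 hc, hδ]
  have := congrArg (Nat.cast : ℕ → ℚ) (natAbs_discr_eq_of_adjoin_eq_top hγ)
  push_cast [Nat.cast_natAbs, h2] at this
  rwa [Algebra.coe_norm_int, RingOfIntegers.coe_eq_algebraMap, hdiff,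
    ← Algebra.norm_norm (S := F), hnorm, sq_abs] at this

end RelativelyMonogenic

theorem stmt18_general
    (F K : Type*) [Field F] [Field K] [NumberField F] [NumberField K] [Algebra F K]
    (hK : TotallyImaginary K)
    (h2 : Module.finrank F K = 2)
    (c : K ≃ₐ[F] K)
    (hc : ∀ φ : K →+* ℂ, ∀ x : K, φ (c x) = (starRingEnd ℂ) (φ x))
    (γ : 𝓞 K) (hγ : Algebra.adjoin (𝓞 F) ({γ} : Set (𝓞 K)) = ⊤)
    (δ : 𝓞 F)
    (hδ : algebraMap F K (algebraMap (𝓞 F) F δ) =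
      (algebraMap (𝓞 K) K γ - c (algebraMap (𝓞 K) K γ)) *
        (c (algebraMap (𝓞 K) K γ) - algebraMap (𝓞 K) K γ))
    (α : K) (hW : IsWeilGenerator K c.toRingEquiv α)
    (u : (𝓞 F)ˣ) (η : 𝓞 F) (a : ℤ)
    (hrep : α = (algebraMap F K (algebraMap (𝓞 F) F (u : 𝓞 F)) *
          (algebraMap (𝓞 K) K γ - c (algebraMap (𝓞 K) K γ)) +
        algebraMap F K (algebraMap (𝓞 F) F η) + (a : K)) / 2) :
    ∃ A B : ℤ,
      (algebraMap (𝓞 F) F (u : 𝓞 F)) ^ 2 * algebraMap (𝓞 F) F δ +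
          (algebraMap (𝓞 F) F η) ^ 2 =
        (A : F) + (B : F) * algebraMap (𝓞 F) F η ∧
      Algebra.norm ℚ ((A : F) + (B : F) * algebraMap (𝓞 F) F η -
          (algebraMap (𝓞 F) F η) ^ 2) =
        |(NumberField.discr K : ℚ)| / (NumberField.discr F : ℚ) ^ 2 := by
  obtain ⟨-, ⟨n, hn⟩, -⟩ := hW
  have hc : IsComplexConj c := hc
  have hδ' : algebraMap F K (algebraMap (𝓞 F) F δ) =
      (algebraMap (𝓞 K) K γ - c (algebraMap (𝓞 K) K γ)) *
        c (algebraMap (𝓞 K) K γ - c (algebraMap (𝓞 K) K γ)) := by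
    rw [hδ, map_sub, hc.apply_apply]
  have hrel := sq_mul_add_sq_eq_of_mul_conj_eq_intCast hc.apply_apply hδ hn hrep
  refine ⟨4 * n - a ^ 2, -(2 * a), hrel, ?_⟩
  rw [← hrel, add_sub_cancel_right, map_mul, map_pow, ← sq_abs (Algebra.norm ℚ _),
    NumberField.Units.norm, one_pow, one_mul,
    abs_discr_eq_abs_norm_mul_discr_sq h2 (hc.ne_one hK) hγ hδ',
    abs_of_nonneg (hc.norm_nonneg_of_algebraMap_eq_mul hδ'),
    mul_div_cancel_right₀ _ (pow_ne_zero 2 (Int.cast_ne_zero.mpr (discr_ne_zero F)))]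

/-- Let `K` be a CM field of degree `2g` (`g ≥ 3`) with maximal
totally real subfield `F`, complex conjugation `c`, `γ ∈ 𝓞 K` with `𝓞 K = 𝓞 F[γ]`,
and `δ = (γ - γ̄)(γ̄ - γ) ∈ 𝓞 F`.  If `α` is a Weil generator for `K` written as
`α = (u(γ - γ̄) + η + a)/2` with `u ∈ 𝓞 F ˣ`, `ℤ[η] = 𝓞 F`, `a ∈ ℤ`, then there are
integers `A, B` with `u²δ + η² = A + Bη`, and consequently
`N_{F/ℚ}(A + Bη - η²) = |Disc K| / Disc F²`: the pair `(A, B)` is an integral point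
on the affine plane curve `∏_σ (x + yσ(η) - σ(η)²) = |Disc K| / Disc F²`. -/
theorem stmt18 (g : ℕ) (hg : 3 ≤ g)
    (F K : Type*) [Field F] [Field K] [NumberField F] [NumberField K] [Algebra F K]
    (hF : TotallyReal F) (hK : TotallyImaginary K)
    (hgF : Module.finrank ℚ F = g) (h2 : Module.finrank F K = 2)
    (c : K ≃ₐ[F] K)
    (hc : ∀ φ : K →+* ℂ, ∀ x : K, φ (c x) = (starRingEnd ℂ) (φ x))
    (γ : 𝓞 K) (hγ : Algebra.adjoin (𝓞 F) ({γ} : Set (𝓞 K)) = ⊤)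
    (δ : 𝓞 F)
    (hδ : algebraMap F K (algebraMap (𝓞 F) F δ) =
      (algebraMap (𝓞 K) K γ - c (algebraMap (𝓞 K) K γ)) *
        (c (algebraMap (𝓞 K) K γ) - algebraMap (𝓞 K) K γ))
    (α : K) (hW : IsWeilGenerator K c.toRingEquiv α)
    (u : (𝓞 F)ˣ) (η : 𝓞 F) (hη : Algebra.adjoin ℤ ({η} : Set (𝓞 F)) = ⊤) (a : ℤ)
    (hrep : α = (algebraMap F K (algebraMap (𝓞 F) F (u : 𝓞 F)) *
          (algebraMap (𝓞 K) K γ - c (algebraMap (𝓞 K) K γ)) +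
        algebraMap F K (algebraMap (𝓞 F) F η) + (a : K)) / 2) :
    ∃ A B : ℤ,
      (algebraMap (𝓞 F) F (u : 𝓞 F)) ^ 2 * algebraMap (𝓞 F) F δ +
          (algebraMap (𝓞 F) F η) ^ 2 =
        (A : F) + (B : F) * algebraMap (𝓞 F) F η ∧
      Algebra.norm ℚ ((A : F) + (B : F) * algebraMap (𝓞 F) F η -
          (algebraMap (𝓞 F) F η) ^ 2) =
        |(NumberField.discr K : ℚ)| / (NumberField.discr F : ℚ) ^ 2 :=
  stmt18_general F K hK h2 c hc γ hγ δ hδ α hW u η a hrep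
end
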